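/- arXiv:2602.04691 — 6 statements merged into one kernel-verified Lean document; each statement's English description precedes it below -/
import Mathlib

section
/- Consider a sequence of fixed-design clustered linear models indexed by the number of clusters G, and suppose there are constants M, C > 0 such that for every G and every cluster g ≤ G, tr((X_gᵀX_g/N_g)⁻¹) ≤ M and λ_max(Ω_g) ≤ C · N_g (strong within-cluster dependence). Then E‖β̂_G − β‖² ≤ M·C/G for every G; in particular β̂_G → β in L² (hence in probability) as G → ∞, regardless of the cluster sizes N_g. -/
open MeasureTheory ProbabilityTheory Matrix Filter

/-- Largest eigenvalue of a real symmetric matrix via the Rayleigh quotient. -/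
noncomputable def lamMax {n : ℕ} (S : Matrix (Fin n) (Fin n) ℝ) : ℝ :=
  ⨆ v : {v : Fin n → ℝ // ∑ i, v i ^ 2 = 1}, v.1 ⬝ᵥ S.mulVec v.1

/-!
With `A_g = (X_gᵀX_g)⁻¹X_gᵀ` one has `β̂_G - β = G⁻¹ ∑_g A_g ε_g`. The summands are independent
and centred, so the cross terms vanish and `E‖β̂_G - β‖² = G⁻² ∑_g E‖A_g ε_g‖²`. Summing the
Rayleigh bound `E(aᵀε_g)² = aᵀΩ_g a ≤ λ_max(Ω_g)‖a‖²` over the rows `a` of `A_g` gives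
`E‖A_g ε_g‖² ≤ λ_max(Ω_g) tr(A_g A_gᵀ) = λ_max(Ω_g) tr((X_gᵀX_g)⁻¹) ≤ C N_g · M / N_g = M C`,
hence the rate `M C / G`; Markov's inequality turns it into convergence in probability.
-/

lemma abs_le_one_of_sum_sq_eq_one {n : Type*} [Fintype n] {u : n → ℝ}
    (hu : ∑ i, u i ^ 2 = 1) (i : n) : |u i| ≤ 1 := by
  rw [← sq_le_one_iff_abs_le_one, ← hu]
  exact Finset.single_le_sum (fun j _ => sq_nonneg (u j)) (Finset.mem_univ i)

lemma dotProduct_mulVec_le_sum_abs {n : Type*} [Fintype n] (S : Matrix n n ℝ) {u : n → ℝ}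
    (hu : ∀ i, |u i| ≤ 1) : u ⬝ᵥ S *ᵥ u ≤ ∑ i, ∑ j, |S i j| := by
  simp only [dotProduct, mulVec, Finset.mul_sum]
  gcongr with i _ j _
  calc u i * (S i j * u j) ≤ |u i| * (|S i j| * |u j|) := by
        rw [← abs_mul, ← abs_mul]; exact le_abs_self _
    _ ≤ 1 * (|S i j| * 1) := by gcongr; exacts [hu i, hu j]
    _ = |S i j| := by ring

lemma bddAbove_rayleigh {n : ℕ} (S : Matrix (Fin n) (Fin n) ℝ) :
    BddAbove (Set.range fun u : {v : Fin n → ℝ // ∑ i, v i ^ 2 = 1} => u.1 ⬝ᵥ S *ᵥ u.1) := by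
  refine ⟨∑ i, ∑ j, |S i j|, ?_⟩
  rintro _ ⟨u, rfl⟩
  exact dotProduct_mulVec_le_sum_abs S (abs_le_one_of_sum_sq_eq_one u.2)

lemma dotProduct_mulVec_le_lamMax_mul {n : ℕ} (S : Matrix (Fin n) (Fin n) ℝ) (v : Fin n → ℝ) :
    v ⬝ᵥ S *ᵥ v ≤ lamMax S * ∑ i, v i ^ 2 := by
  rcases (Finset.sum_nonneg fun i _ => sq_nonneg (v i)).eq_or_lt with hc0 | hcpos
  · have hv : v = 0 := funext fun i => by
      simpa using
        congrFun ((Fintype.sum_eq_zero_iff_of_nonneg fun j => sq_nonneg (v j)).1 hc0.symm) i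
    simp [hv]
  · set c := ∑ i, v i ^ 2 with hc
    set u := (√c)⁻¹ • v
    have hsq : (√c)⁻¹ ^ 2 = c⁻¹ := by rw [inv_pow, Real.sq_sqrt hcpos.le]
    have hu : ∑ i, u i ^ 2 = 1 := by
      simp only [u, Pi.smul_apply, smul_eq_mul, mul_pow, ← Finset.mul_sum, hsq, ← hc]
      exact inv_mul_cancel₀ hcpos.ne'
    have hquad : u ⬝ᵥ S *ᵥ u = c⁻¹ * (v ⬝ᵥ S *ᵥ v) := by
      simp only [u, mulVec_smul, smul_dotProduct, dotProduct_smul, smul_eq_mul, ← mul_assoc, ← sq,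
        hsq]
    have hle : u ⬝ᵥ S *ᵥ u ≤ lamMax S := le_ciSup (bddAbove_rayleigh S) ⟨u, hu⟩
    rw [hquad, inv_mul_le_iff₀ hcpos] at hle
    linarith

section LeastSquares

variable {m n : Type*} [Fintype m] [Fintype n] [DecidableEq n] {X : Matrix m n ℝ}

lemma inv_gram_mulVec_transpose_mulVec (hX : IsUnit (Xᵀ * X).det) (β : n → ℝ) (e : m → ℝ) :
    (Xᵀ * X)⁻¹ *ᵥ (Xᵀ *ᵥ (X *ᵥ β + e)) = β + ((Xᵀ * X)⁻¹ * Xᵀ) *ᵥ e := by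
  rw [mulVec_add, mulVec_add, mulVec_mulVec, mulVec_mulVec, mulVec_mulVec, Matrix.mul_assoc,
    nonsing_inv_mul _ hX, one_mulVec]

lemma pinv_mul_pinv_transpose (hX : IsUnit (Xᵀ * X).det) :
    ((Xᵀ * X)⁻¹ * Xᵀ) * ((Xᵀ * X)⁻¹ * Xᵀ)ᵀ = (Xᵀ * X)⁻¹ := by
  rw [transpose_mul, transpose_transpose, transpose_nonsing_inv, transpose_mul,
    transpose_transpose, Matrix.mul_assoc, ← Matrix.mul_assoc Xᵀ, mul_nonsing_inv _ hX,
    Matrix.mul_one]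

lemma sum_sq_pinv_eq_trace (hX : IsUnit (Xᵀ * X).det) :
    ∑ i, ∑ j, ((Xᵀ * X)⁻¹ * Xᵀ) i j ^ 2 = trace (Xᵀ * X)⁻¹ := by
  conv_rhs => rw [← pinv_mul_pinv_transpose hX]
  simp only [trace, diag, mul_apply, transpose_apply, sq]

lemma trace_inv_gram_nonneg (hX : IsUnit (Xᵀ * X).det) : 0 ≤ trace (Xᵀ * X)⁻¹ := by
  rw [← sum_sq_pinv_eq_trace hX]
  positivity

lemma trace_inv_inv_smul {c : ℝ} (hc : c ≠ 0) (hX : IsUnit (Xᵀ * X).det) :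
    trace ((c⁻¹ • (Xᵀ * X))⁻¹) = c * trace (Xᵀ * X)⁻¹ := by
  have : (c⁻¹ • (Xᵀ * X))⁻¹ = c • (Xᵀ * X)⁻¹ :=
    inv_eq_left_inv (by rw [smul_mul_smul, nonsing_inv_mul _ hX, mul_inv_cancel₀ hc, one_smul])
  rw [this, trace_smul, smul_eq_mul]

end LeastSquares

section Moments

variable {Ω : Type*} [MeasurableSpace Ω] {μ : Measure Ω}

lemma memLp_mulVec_apply {m n : Type*} [Fintype n] {p : ENNReal} (A : Matrix m n ℝ)
    {ε : Ω → n → ℝ} (hε : ∀ j, MemLp (fun ω => ε ω j) p μ) (i : m) :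
    MemLp (fun ω => (A *ᵥ ε ω) i) p μ :=
  memLp_finsetSum _ fun j _ => (hε j).const_mul (A i j)

lemma integral_mulVec_apply {m n : Type*} [Fintype n] (A : Matrix m n ℝ)
    {ε : Ω → n → ℝ} (hε : ∀ j, Integrable (fun ω => ε ω j) μ) (i : m) :
    ∫ ω, (A *ᵥ ε ω) i ∂μ = (A *ᵥ fun j => ∫ ω, ε ω j ∂μ) i := by
  simp only [mulVec, dotProduct]
  rw [integral_finsetSum _ fun j _ => (hε j).const_mul (A i j)]
  simp_rw [integral_const_mul]

lemma integral_sq_dotProduct {n : Type*} [Fintype n] {ε : Ω → n → ℝ}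
    (hε : ∀ j, MemLp (fun ω => ε ω j) 2 μ) {S : Matrix n n ℝ}
    (hS : ∀ j l, S j l = ∫ ω, ε ω j * ε ω l ∂μ) (a : n → ℝ) :
    ∫ ω, (a ⬝ᵥ ε ω) ^ 2 ∂μ = a ⬝ᵥ S *ᵥ a := by
  have hprod : ∀ j l, Integrable (fun ω => ε ω j * ε ω l) μ :=
    fun j l => (hε j).integrable_mul (hε l)
  calc ∫ ω, (a ⬝ᵥ ε ω) ^ 2 ∂μ = ∫ ω, ∑ j, ∑ l, a j * a l * (ε ω j * ε ω l) ∂μ := by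
        congr with ω
        simp only [sq, dotProduct, Finset.sum_mul_sum]
        exact Finset.sum_congr rfl fun j _ => Finset.sum_congr rfl fun l _ => by ring
    _ = ∑ j, ∑ l, a j * a l * ∫ ω, ε ω j * ε ω l ∂μ := by
        rw [integral_finsetSum _ fun j _ => integrable_finsetSum _ fun l _ =>
          (hprod j l).const_mul _]
        refine Finset.sum_congr rfl fun j _ => ?_
        rw [integral_finsetSum _ fun l _ => (hprod j l).const_mul _]
        simp_rw [integral_const_mul]
    _ = a ⬝ᵥ S *ᵥ a := by
        simp only [dotProduct, mulVec, hS, Finset.mul_sum]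
        exact Finset.sum_congr rfl fun j _ => Finset.sum_congr rfl fun l _ => by ring

lemma integral_sum_sq_pinv_mulVec_le {N k : ℕ} {X : Matrix (Fin N) (Fin k) ℝ}
    (hX : IsUnit (Xᵀ * X).det) {ε : Ω → Fin N → ℝ} (hε : ∀ j, MemLp (fun ω => ε ω j) 2 μ)
    {S : Matrix (Fin N) (Fin N) ℝ} (hS : ∀ j l, S j l = ∫ ω, ε ω j * ε ω l ∂μ) :
    ∫ ω, ∑ i, (((Xᵀ * X)⁻¹ * Xᵀ) *ᵥ ε ω) i ^ 2 ∂μ ≤ lamMax S * trace (Xᵀ * X)⁻¹ := by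
  rw [integral_finsetSum _ fun i _ => (memLp_mulVec_apply _ hε i).integrable_sq,
    ← sum_sq_pinv_eq_trace hX, Finset.mul_sum]
  gcongr with i
  exact (integral_sq_dotProduct hε hS _).trans_le (dotProduct_mulVec_le_lamMax_mul S _)

variable [IsFiniteMeasure μ]

lemma integral_sq_sum_of_indepFun {ι : Type*} [Fintype ι] {Z : ι → Ω → ℝ}
    (hZ : ∀ g, MemLp (Z g) 2 μ) (hmean : ∀ g, ∫ ω, Z g ω ∂μ = 0)
    (hind : Pairwise fun g h => IndepFun (Z g) (Z h) μ) :
    ∫ ω, (∑ g, Z g ω) ^ 2 ∂μ = ∑ g, ∫ ω, Z g ω ^ 2 ∂μ := by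
  have hvar := IndepFun.variance_sum (s := Finset.univ) (fun g _ => hZ g)
    fun g _ h _ hgh => hind hgh
  have hsum : ∫ ω, (∑ g, Z g) ω ∂μ = 0 := by
    simp only [Finset.sum_apply]
    rw [integral_finsetSum _ fun g _ => (hZ g).integrable one_le_two]
    exact Finset.sum_eq_zero fun g _ => hmean g
  rw [variance_of_integral_eq_zero (memLp_finsetSum' _ fun g _ => hZ g).aemeasurable hsum] at hvar
  simp only [Finset.sum_apply] at hvar
  rw [hvar]
  exact Finset.sum_congr rfl fun g _ =>
    variance_of_integral_eq_zero (hZ g).aemeasurable (hmean g)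

lemma integral_sum_sq_sum_of_indepFun {ι κ : Type*} [Fintype ι] [Fintype κ]
    {V : ι → Ω → κ → ℝ} (hV : ∀ g i, MemLp (fun ω => V g ω i) 2 μ)
    (hmean : ∀ g i, ∫ ω, V g ω i ∂μ = 0) (hind : Pairwise fun g h => IndepFun (V g) (V h) μ) :
    ∫ ω, ∑ i, (∑ g, V g ω i) ^ 2 ∂μ = ∑ g, ∫ ω, ∑ i, V g ω i ^ 2 ∂μ := by
  rw [integral_finsetSum _ fun i _ => (memLp_finsetSum _ fun g _ => hV g i).integrable_sq]
  simp_rw [integral_finsetSum _ fun i _ => (hV _ i).integrable_sq]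
  rw [Finset.sum_comm]
  refine Finset.sum_congr rfl fun i _ => integral_sq_sum_of_indepFun (fun g => hV g i)
    (fun g => hmean g i) fun g h hgh => ?_
  exact (hind hgh).comp (measurable_pi_apply i) (measurable_pi_apply i)

lemma measure_le_sqrt_le_ofReal_integral_div_sq {f : Ω → ℝ} (hf0 : ∀ ω, 0 ≤ f ω)
    (hf : Integrable f μ) {η : ℝ} (hη : 0 < η) :
    μ {ω | η ≤ √(f ω)} ≤ ENNReal.ofReal ((∫ ω, f ω ∂μ) / η ^ 2) := by
  have hset : {ω | η ≤ √(f ω)} = {ω | η ^ 2 ≤ f ω} := by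
    ext ω
    exact Real.le_sqrt hη.le (hf0 ω)
  have hmarkov := mul_meas_ge_le_integral_of_nonneg (ae_of_all μ hf0) hf (η ^ 2)
  rw [hset, ← ofReal_measureReal]
  exact ENNReal.ofReal_le_ofReal ((le_div_iff₀ (by positivity)).2 (by linarith))

end Moments

lemma lamMax_mul_trace_inv_gram_le {N k : ℕ} {X : Matrix (Fin N) (Fin k) ℝ}
    (hX : IsUnit (Xᵀ * X).det) (hN : N ≠ 0) {S : Matrix (Fin N) (Fin N) ℝ} {M C : ℝ} (hC : 0 ≤ C)
    (hTr : trace (((N : ℝ)⁻¹ • (Xᵀ * X))⁻¹) ≤ M) (hEig : lamMax S ≤ C * N) :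
    lamMax S * trace (Xᵀ * X)⁻¹ ≤ M * C := by
  rw [trace_inv_inv_smul (Nat.cast_ne_zero.2 hN) hX] at hTr
  calc lamMax S * trace (Xᵀ * X)⁻¹ ≤ C * N * trace (Xᵀ * X)⁻¹ :=
        mul_le_mul_of_nonneg_right hEig (trace_inv_gram_nonneg hX)
    _ = C * (N * trace (Xᵀ * X)⁻¹) := mul_assoc _ _ _
    _ ≤ C * M := mul_le_mul_of_nonneg_left hTr hC
    _ = M * C := mul_comm _ _

theorem integral_sum_sq_clusterAverage_sub_le {Ω : Type*} [MeasurableSpace Ω] {μ : Measure Ω}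
    [IsFiniteMeasure μ] {G k : ℕ} (hG : G ≠ 0) (β : Fin k → ℝ) {N : Fin G → ℕ}
    (hN : ∀ g, N g ≠ 0) {X : (g : Fin G) → Matrix (Fin (N g)) (Fin k) ℝ}
    (hX : ∀ g, IsUnit ((X g)ᵀ * X g).det) {ε : (g : Fin G) → Ω → Fin (N g) → ℝ}
    (hε : ∀ g j, MemLp (fun ω => ε g ω j) 2 μ) (hmean : ∀ g j, ∫ ω, ε g ω j ∂μ = 0)
    (hindep : iIndepFun ε μ) {S : (g : Fin G) → Matrix (Fin (N g)) (Fin (N g)) ℝ}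
    (hS : ∀ g j l, S g j l = ∫ ω, ε g ω j * ε g ω l ∂μ) {M C : ℝ} (hC : 0 ≤ C)
    (hTr : ∀ g, trace (((N g : ℝ)⁻¹ • ((X g)ᵀ * X g))⁻¹) ≤ M)
    (hEig : ∀ g, lamMax (S g) ≤ C * N g) {betaHat : Ω → Fin k → ℝ}
    (hbetaHat : ∀ ω, betaHat ω =
      (G : ℝ)⁻¹ • ∑ g, ((X g)ᵀ * X g)⁻¹ *ᵥ ((X g)ᵀ *ᵥ (X g *ᵥ β + ε g ω))) :
    Integrable (fun ω => ∑ i, (betaHat ω i - β i) ^ 2) μ ∧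
      ∫ ω, ∑ i, (betaHat ω i - β i) ^ 2 ∂μ ≤ M * C / G := by
  set V : Fin G → Ω → Fin k → ℝ := fun g ω => (((X g)ᵀ * X g)⁻¹ * (X g)ᵀ) *ᵥ ε g ω
  have hV : ∀ g i, MemLp (fun ω => V g ω i) 2 μ := fun g => memLp_mulVec_apply _ (hε g)
  have hVmean : ∀ g i, ∫ ω, V g ω i ∂μ = 0 := fun g i => by
    rw [integral_mulVec_apply _ (fun j => (hε g j).integrable one_le_two),
      show (fun j => ∫ ω, ε g ω j ∂μ) = 0 from funext (hmean g), mulVec_zero, Pi.zero_apply]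
  have hVind : Pairwise fun g h => IndepFun (V g) (V h) μ := fun g h hgh =>
    (hindep.indepFun hgh).comp (continuous_const.matrix_mulVec continuous_id).measurable
      (continuous_const.matrix_mulVec continuous_id).measurable
  have hdev : ∀ ω i, betaHat ω i - β i = (G : ℝ)⁻¹ * ∑ g, V g ω i := fun ω i => by
    simp only [hbetaHat, inv_gram_mulVec_transpose_mulVec (hX _), Pi.smul_apply,
      Finset.sum_apply, Pi.add_apply, Finset.sum_add_distrib, Finset.sum_const, Finset.card_univ,
      Fintype.card_fin, nsmul_eq_mul, smul_eq_mul, Pi.mul_apply, Pi.natCast_apply, V]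
    field_simp
    ring
  have hdevL2 : ∀ i, MemLp (fun ω => betaHat ω i - β i) 2 μ := fun i => by
    simp_rw [hdev]
    exact (memLp_finsetSum _ fun g _ => hV g i).const_mul _
  refine ⟨integrable_finsetSum _ fun i _ => (hdevL2 i).integrable_sq, ?_⟩
  calc ∫ ω, ∑ i, (betaHat ω i - β i) ^ 2 ∂μ
      = (G : ℝ)⁻¹ ^ 2 * ∑ g, ∫ ω, ∑ i, V g ω i ^ 2 ∂μ := by
        simp_rw [hdev, mul_pow, ← Finset.mul_sum]
        rw [integral_const_mul, integral_sum_sq_sum_of_indepFun hV hVmean hVind]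
    _ ≤ (G : ℝ)⁻¹ ^ 2 * ∑ _g : Fin G, M * C := by
        gcongr with g
        exact (integral_sum_sq_pinv_mulVec_le (hX g) (hε g) (hS g)).trans
          (lamMax_mul_trace_inv_gram_le (hX g) (hN g) hC (hTr g) (hEig g))
    _ = M * C / G := by
        simp only [Finset.sum_const, Finset.card_univ, Fintype.card_fin, nsmul_eq_mul]
        field_simp

theorem stmt4_general {Ωs : Type*} [MeasurableSpace Ωs] (μ : Measure Ωs) [IsProbabilityMeasure μ]
    (k : ℕ) (β : Fin k → ℝ)
    (N : (G : ℕ) → Fin G → ℕ) (hN : ∀ G g, 1 ≤ N G g)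
    (X : (G : ℕ) → (g : Fin G) → Matrix (Fin (N G g)) (Fin k) ℝ)
    (hX : ∀ G g, IsUnit ((X G g)ᵀ * X G g).det)
    (ε : (G : ℕ) → (g : Fin G) → Ωs → (Fin (N G g) → ℝ))
    (hmeas : ∀ G g, Measurable (ε G g))
    (hL2 : ∀ G g i, Integrable (fun ω => (ε G g ω i) ^ 2) μ)
    (hmean : ∀ G g i, ∫ ω, ε G g ω i ∂μ = 0)
    (hindep : ∀ G, iIndepFun (ε G) μ)
    (Ωm : (G : ℕ) → (g : Fin G) → Matrix (Fin (N G g)) (Fin (N G g)) ℝ)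
    (hΩ : ∀ G g i j, Ωm G g i j = ∫ ω, ε G g ω i * ε G g ω j ∂μ)
    (M C : ℝ) (hC : 0 < C)
    (hTr : ∀ G g, Matrix.trace ((((N G g : ℝ))⁻¹ • ((X G g)ᵀ * X G g))⁻¹) ≤ M)
    (hEig : ∀ G g, lamMax (Ωm G g) ≤ C * (N G g : ℝ))
    (betaHat : (G : ℕ) → Ωs → (Fin k → ℝ))
    (hbetaHat : ∀ G ω, betaHat G ω =
      (G : ℝ)⁻¹ • ∑ g, (((X G g)ᵀ * X G g)⁻¹).mulVec
        ((X G g)ᵀ.mulVec ((X G g).mulVec β + ε G g ω))) :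
    (∀ G : ℕ, 1 ≤ G →
      ∫ ω, ∑ i, (betaHat G ω i - β i) ^ 2 ∂μ ≤ M * C / (G : ℝ)) ∧
    Tendsto (fun G : ℕ => ∫ ω, ∑ i, (betaHat G ω i - β i) ^ 2 ∂μ) atTop (nhds 0) ∧
    (∀ η : ℝ, 0 < η →
      Tendsto (fun G : ℕ => μ {ω | η ≤ Real.sqrt (∑ i, (betaHat G ω i - β i) ^ 2)})
        atTop (nhds 0)) := by
  have hε : ∀ G g j, MemLp (fun ω => ε G g ω j) 2 μ := fun G g j =>
    (memLp_two_iff_integrable_sq ((measurable_pi_apply j).comp (hmeas G g)).aestronglyMeasurable).2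
      (hL2 G g j)
  have hbound : ∀ G : ℕ, 1 ≤ G → Integrable (fun ω => ∑ i, (betaHat G ω i - β i) ^ 2) μ ∧
      ∫ ω, ∑ i, (betaHat G ω i - β i) ^ 2 ∂μ ≤ M * C / G := fun G hG =>
    integral_sum_sq_clusterAverage_sub_le (by omega) β (fun g => Nat.one_le_iff_ne_zero.1 (hN G g))
      (hX G) (hε G) (hmean G) (hindep G) (hΩ G) hC.le (hTr G) (hEig G) (hbetaHat G)
  refine ⟨fun G hG => (hbound G hG).2, ?_, fun η hη => ?_⟩
  · exact squeeze_zero' (Eventually.of_forall fun G => integral_nonneg fun ω => by positivity)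
      ((eventually_ge_atTop 1).mono fun G hG => (hbound G hG).2)
      (tendsto_const_div_atTop_nhds_zero_nat (M * C))
  · have hlim : Tendsto (fun G : ℕ => ENNReal.ofReal (M * C / G / η ^ 2)) atTop (nhds 0) := by
      simpa using ENNReal.tendsto_ofReal
        ((tendsto_const_div_atTop_nhds_zero_nat (M * C)).div_const (η ^ 2))
    refine tendsto_of_tendsto_of_tendsto_of_le_of_le' tendsto_const_nhds hlim
      (Eventually.of_forall fun G => zero_le) ?_
    filter_upwards [eventually_ge_atTop 1] with G hG
    refine (measure_le_sqrt_le_ofReal_integral_div_sq (fun ω => by positivity) (hbound G hG).1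
      hη).trans (ENNReal.ofReal_le_ofReal ?_)
    exact div_le_div_of_nonneg_right (hbound G hG).2 (by positivity)

/-- paper's Theorem 1, strong-dependence case, with the
`√G`-consistency rate of the Corollary.  Along a sequence of fixed-design
clustered linear models indexed by the number of clusters `G`, if
`tr((X_gᵀX_g/N_g)⁻¹) ≤ M` and `λ_max(Ω_g) ≤ C·N_g` uniformly, then
`E‖β̂_G − β‖² ≤ M·C/G` for every `G ≥ 1`; in particular `β̂_G → β` in `L²`
(hence in probability) as `G → ∞`, regardless of the cluster sizes. -/
theorem stmt4 {Ωs : Type*} [MeasurableSpace Ωs] (μ : Measure Ωs) [IsProbabilityMeasure μ]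
    (k : ℕ) (β : Fin k → ℝ)
    (N : (G : ℕ) → Fin G → ℕ) (hN : ∀ G g, 1 ≤ N G g)
    (X : (G : ℕ) → (g : Fin G) → Matrix (Fin (N G g)) (Fin k) ℝ)
    (hX : ∀ G g, IsUnit ((X G g)ᵀ * X G g).det)
    (ε : (G : ℕ) → (g : Fin G) → Ωs → (Fin (N G g) → ℝ))
    (hmeas : ∀ G g, Measurable (ε G g))
    (hL2 : ∀ G g i, Integrable (fun ω => (ε G g ω i) ^ 2) μ)
    (hmean : ∀ G g i, ∫ ω, ε G g ω i ∂μ = 0)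
    (hindep : ∀ G, iIndepFun (ε G) μ)
    (Ωm : (G : ℕ) → (g : Fin G) → Matrix (Fin (N G g)) (Fin (N G g)) ℝ)
    (hΩ : ∀ G g i j, Ωm G g i j = ∫ ω, ε G g ω i * ε G g ω j ∂μ)
    (M C : ℝ) (hM : 0 < M) (hC : 0 < C)
    (hTr : ∀ G g, Matrix.trace ((((N G g : ℝ))⁻¹ • ((X G g)ᵀ * X G g))⁻¹) ≤ M)
    (hEig : ∀ G g, lamMax (Ωm G g) ≤ C * (N G g : ℝ))
    (betaHat : (G : ℕ) → Ωs → (Fin k → ℝ))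
    (hbetaHat : ∀ G ω, betaHat G ω =
      (G : ℝ)⁻¹ • ∑ g, (((X G g)ᵀ * X G g)⁻¹).mulVec
        ((X G g)ᵀ.mulVec ((X G g).mulVec β + ε G g ω))) :
    (∀ G : ℕ, 1 ≤ G →
      ∫ ω, ∑ i, (betaHat G ω i - β i) ^ 2 ∂μ ≤ M * C / (G : ℝ)) ∧
    Tendsto (fun G : ℕ => ∫ ω, ∑ i, (betaHat G ω i - β i) ^ 2 ∂μ) atTop (nhds 0) ∧
    (∀ η : ℝ, 0 < η →
      Tendsto (fun G : ℕ => μ {ω | η ≤ Real.sqrt (∑ i, (betaHat G ω i - β i) ^ 2)})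
        atTop (nhds 0)) :=
  stmt4_general μ k β N hN X hX ε hmeas hL2 hmean hindep Ωm hΩ M C hC hTr hEig betaHat hbetaHat
end

section
/- Let X_1,…,X_G be real N_g × k matrices with each X_gᵀX_g invertible, let β ∈ ℝ^k, let ε_1,…,ε_G be arbitrary vectors with ε_g ∈ ℝ^{N_g}, set Y_g = X_g β + ε_g, β̂ = (1/G) Σ_{g=1}^G (X_gᵀX_g)⁻¹ X_gᵀ Y_g, and e_g = Y_g − X_g β̂. Then the following exact matrix identity holds: (1/G) Σ_{g=1}^G (X_gᵀX_g)⁻¹ X_gᵀ e_g e_gᵀ X_g (X_gᵀX_g)⁻¹ = (1/G) Σ_{g=1}^G (X_gᵀX_g)⁻¹ X_gᵀ ε_g ε_gᵀ X_g (X_gᵀX_g)⁻¹ − (β̂ − β)(β̂ − β)ᵀ. -/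
/-!
With `A_g = (X_gᵀX_g)⁻¹X_gᵀ`, a left inverse of `X_g`, each summand is `(A_g e_g)(A_g e_g)ᵀ`.
Writing `u_g = A_g ε_g`, one gets `A_g e_g = u_g − (β̂ − β)` and `β̂ − β` is the mean of the
`u_g`, so the identity is the decomposition of a scatter matrix about the mean:
`∑ (u_g − ū)(u_g − ū)ᵀ = ∑ u_g u_gᵀ − G ū ūᵀ`.
-/

open Matrix

section vecMulVec

variable {ι m n R : Type*} [Fintype ι] [CommRing R]

theorem Matrix.sum_vecMulVec (u : ι → m → R) (v : n → R) :
    ∑ i, vecMulVec (u i) v = vecMulVec (∑ i, u i) v := by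
  ext a b
  simp only [Matrix.sum_apply, vecMulVec_apply, Finset.sum_apply, Finset.sum_mul]

theorem Matrix.vecMulVec_sum (u : m → R) (v : ι → n → R) :
    ∑ i, vecMulVec u (v i) = vecMulVec u (∑ i, v i) := by
  ext a b
  simp only [Matrix.sum_apply, vecMulVec_apply, Finset.sum_apply, Finset.mul_sum]

theorem Matrix.sum_vecMulVec_sub_mean (u : ι → m → R) (δ : m → R)
    (hδ : ∑ i, u i = (Fintype.card ι : R) • δ) :
    ∑ i, vecMulVec (u i - δ) (u i - δ)
      = ∑ i, vecMulVec (u i) (u i) - (Fintype.card ι : R) • vecMulVec δ δ := by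
  have hexpand : ∀ i, vecMulVec (u i - δ) (u i - δ)
      = vecMulVec (u i) (u i) - vecMulVec (u i) δ - vecMulVec δ (u i) + vecMulVec δ δ := by
    intro i
    rw [sub_vecMulVec, vecMulVec_sub, vecMulVec_sub]
    abel
  simp only [hexpand, Finset.sum_add_distrib, Finset.sum_sub_distrib, sum_vecMulVec,
    vecMulVec_sum, hδ, smul_vecMulVec, vecMulVec_smul, Finset.sum_const, Finset.card_univ,
    ← Nat.cast_smul_eq_nsmul R]
  abel

variable [Fintype m]

theorem Matrix.mul_vecMulVec_mul_transpose (A : Matrix n m R) (v : m → R) :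
    A * vecMulVec v v * Aᵀ = vecMulVec (A *ᵥ v) (A *ᵥ v) := by
  rw [mul_vecMulVec, vecMulVec_mul, vecMul_transpose]

end vecMulVec

section leastSquares

variable {m n R : Type*} [Fintype m] [Fintype n] [DecidableEq n] [CommRing R]

theorem Matrix.transpose_gram_inv_mul_transpose (X : Matrix m n R) :
    ((Xᵀ * X)⁻¹ * Xᵀ)ᵀ = X * (Xᵀ * X)⁻¹ := by
  rw [transpose_mul, transpose_transpose, transpose_nonsing_inv, transpose_mul,
    transpose_transpose]

theorem Matrix.gram_inv_mul_transpose_mul_self (X : Matrix m n R) (hX : IsUnit (Xᵀ * X).det) :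
    (Xᵀ * X)⁻¹ * Xᵀ * X = 1 := by
  rw [Matrix.mul_assoc, nonsing_inv_mul _ hX]

theorem Matrix.gram_inv_mul_transpose_sandwich (X : Matrix m n R) (v : m → R) :
    (Xᵀ * X)⁻¹ * Xᵀ * vecMulVec v v * X * (Xᵀ * X)⁻¹
      = vecMulVec (((Xᵀ * X)⁻¹ * Xᵀ) *ᵥ v) (((Xᵀ * X)⁻¹ * Xᵀ) *ᵥ v) := by
  rw [← mul_vecMulVec_mul_transpose, transpose_gram_inv_mul_transpose, Matrix.mul_assoc _ X]

theorem Matrix.gram_inv_mul_transpose_mulVec_mulVec (X : Matrix m n R)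
    (hX : IsUnit (Xᵀ * X).det) (w : n → R) :
    ((Xᵀ * X)⁻¹ * Xᵀ) *ᵥ (X *ᵥ w) = w := by
  rw [mulVec_mulVec, gram_inv_mul_transpose_mul_self X hX, one_mulVec]

end leastSquares

/-- exact decomposition of the variance estimator from the
proof of the paper's Theorem 3.  With `Y_g = X_g β + ε_g`,
`β̂ = (1/G)∑_g (X_gᵀX_g)⁻¹X_gᵀY_g` and residuals `e_g = Y_g − X_g β̂`,
`(1/G)∑_g (X_gᵀX_g)⁻¹X_gᵀ e_g e_gᵀ X_g (X_gᵀX_g)⁻¹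
  = (1/G)∑_g (X_gᵀX_g)⁻¹X_gᵀ ε_g ε_gᵀ X_g (X_gᵀX_g)⁻¹ − (β̂−β)(β̂−β)ᵀ`. -/
theorem stmt7 (G k : ℕ) (hG : 1 ≤ G) (N : Fin G → ℕ)
    (X : (g : Fin G) → Matrix (Fin (N g)) (Fin k) ℝ)
    (hX : ∀ g, IsUnit ((X g)ᵀ * X g).det)
    (β : Fin k → ℝ)
    (ε : (g : Fin G) → Fin (N g) → ℝ)
    (Y : (g : Fin G) → Fin (N g) → ℝ)
    (hY : ∀ g, Y g = (X g).mulVec β + ε g)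
    (betaHat : Fin k → ℝ)
    (hbetaHat : betaHat =
      (G : ℝ)⁻¹ • ∑ g, (((X g)ᵀ * X g)⁻¹).mulVec ((X g)ᵀ.mulVec (Y g)))
    (e : (g : Fin G) → Fin (N g) → ℝ)
    (he : ∀ g, e g = Y g - (X g).mulVec betaHat) :
    (G : ℝ)⁻¹ • ∑ g, ((X g)ᵀ * X g)⁻¹ * (X g)ᵀ * vecMulVec (e g) (e g) * X g *
        ((X g)ᵀ * X g)⁻¹
      = (G : ℝ)⁻¹ • ∑ g, ((X g)ᵀ * X g)⁻¹ * (X g)ᵀ * vecMulVec (ε g) (ε g) * X g *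
          ((X g)ᵀ * X g)⁻¹
        - vecMulVec (betaHat - β) (betaHat - β) := by
  simp only [gram_inv_mul_transpose_sandwich]
  have hG0 : (G : ℝ) ≠ 0 := Nat.cast_ne_zero.mpr (by omega)
  set A := fun g => ((X g)ᵀ * X g)⁻¹ * (X g)ᵀ
  set u := fun g => A g *ᵥ ε g
  have hmean : ∑ g, u g = (Fintype.card (Fin G) : ℝ) • (betaHat - β) := by
    have hclusters : ∀ g, ((X g)ᵀ * X g)⁻¹ *ᵥ ((X g)ᵀ *ᵥ Y g) = β + u g := fun g => by
      rw [mulVec_mulVec, hY, mulVec_add, gram_inv_mul_transpose_mulVec_mulVec _ (hX g)]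
    rw [hbetaHat, Fintype.card_fin, smul_sub, smul_smul, mul_inv_cancel₀ hG0, one_smul]
    simp only [hclusters, Finset.sum_add_distrib, Finset.sum_const, Finset.card_univ,
      Fintype.card_fin, ← Nat.cast_smul_eq_nsmul ℝ, add_sub_cancel_left]
  have hresid : ∀ g, A g *ᵥ e g = u g - (betaHat - β) := fun g => by
    have he' : e g = ε g - X g *ᵥ (betaHat - β) := by rw [he, hY, mulVec_sub]; abel
    rw [he', mulVec_sub, gram_inv_mul_transpose_mulVec_mulVec _ (hX g)]
  calc (G : ℝ)⁻¹ • ∑ g, vecMulVec (A g *ᵥ e g) (A g *ᵥ e g)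
      = (G : ℝ)⁻¹ • ∑ g, vecMulVec (u g - (betaHat - β)) (u g - (betaHat - β)) := by
        simp only [hresid]
    _ = (G : ℝ)⁻¹ • ∑ g, vecMulVec (u g) (u g) - vecMulVec (betaHat - β) (betaHat - β) := by
        rw [sum_vecMulVec_sub_mean u _ hmean, Fintype.card_fin, smul_sub, smul_smul,
          inv_mul_cancel₀ hG0, one_smul]
end

section
/- In the fixed-design random coefficient clustered model, the cluster-average estimator β̂ is unbiased for β, and its mean squared error satisfies the exact identity E‖β̂ − β‖² = (1/G²) Σ_{g=1}^G tr((X_gᵀX_g)⁻¹ X_gᵀ Ω_g X_g (X_gᵀX_g)⁻¹) + tr(Δ)/G. Consequently, if tr((X_gᵀX_g)⁻¹)·λ_max(Ω_g) ≤ K for all g, then E‖β̂ − β‖² ≤ (K + tr(Δ))/G, so β̂ → β in L² (hence in probability) as G → ∞, for any within-cluster dependence and arbitrary cluster sizes. -/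
open MeasureTheory ProbabilityTheory Matrix Filter

section helpers
variable {Ωs : Type*} [MeasurableSpace Ωs] {μ : Measure Ωs} [IsProbabilityMeasure μ]

lemma intmul {f g : Ωs → ℝ} (hf : Measurable f) (hg : Measurable g)
    (hf2 : Integrable (fun ω => f ω ^ 2) μ) (hg2 : Integrable (fun ω => g ω ^ 2) μ) :
    Integrable (fun ω => f ω * g ω) μ := by
  refine Integrable.mono' ((hf2.add hg2).const_mul (2⁻¹ : ℝ))
    (hf.mul hg).aestronglyMeasurable (ae_of_all _ fun ω => ?_)
  simp only [Pi.add_apply]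
  have h := sq_nonneg (|f ω| - |g ω|)
  have h2 : ‖f ω * g ω‖ = |f ω| * |g ω| := by rw [Real.norm_eq_abs, abs_mul]
  rw [h2]
  nlinarith [sq_abs (f ω), sq_abs (g ω)]

lemma intone {f : Ωs → ℝ} (hf : Measurable f)
    (hf2 : Integrable (fun ω => f ω ^ 2) μ) : Integrable f μ := by
  have : Integrable (fun ω => f ω * 1) μ :=
    intmul hf measurable_const hf2 (by simpa using integrable_const (μ := μ) (1:ℝ))
  simpa using this

omit [IsProbabilityMeasure μ] in
/-- zero-mean independent product integrates to zero -/
lemma int_indep_zero {f g : Ωs → ℝ} (h : IndepFun f g μ)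
    (hfi : Integrable f μ) (hgi : Integrable g μ) (hf0 : ∫ ω, f ω ∂μ = 0) :
    ∫ ω, f ω * g ω ∂μ = 0 := by
  have := h.integral_fun_mul_eq_mul_integral hfi.aestronglyMeasurable hgi.aestronglyMeasurable
  calc ∫ ω, f ω * g ω ∂μ = (∫ ω, f ω ∂μ) * ∫ ω, g ω ∂μ := this
    _ = 0 := by rw [hf0, zero_mul]

end helpers

section rayleigh

lemma rayleigh_bound {n : ℕ} (Ω : Matrix (Fin n) (Fin n) ℝ) (w : Fin n → ℝ) :
    w ⬝ᵥ Ω.mulVec w ≤ lamMax Ω * ∑ j, w j ^ 2 := by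
  have hbdd : BddAbove (Set.range fun v : {v : Fin n → ℝ // ∑ i, v i ^ 2 = 1} =>
      v.1 ⬝ᵥ Ω.mulVec v.1) := by
    refine ⟨∑ m, ∑ l, |Ω m l|, ?_⟩
    rintro x ⟨⟨v, hv⟩, rfl⟩
    have hv1 : ∀ m, |v m| ≤ 1 := by
      intro m
      have h1 : v m ^ 2 ≤ 1 := by
        rw [← hv]
        exact Finset.single_le_sum (fun i _ => sq_nonneg (v i)) (Finset.mem_univ m)
      nlinarith [abs_nonneg (v m), sq_abs (v m)]
    simp only [dotProduct, mulVec]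
    calc ∑ m, v m * ∑ l, Ω m l * v l = ∑ m, ∑ l, v m * (Ω m l * v l) := by
          simp [Finset.mul_sum]
      _ ≤ ∑ m, ∑ l, |Ω m l| := by
          refine Finset.sum_le_sum fun m _ => Finset.sum_le_sum fun l _ => ?_
          calc v m * (Ω m l * v l) ≤ |v m * (Ω m l * v l)| := le_abs_self _
            _ = |v m| * |Ω m l| * |v l| := by rw [abs_mul, abs_mul, mul_assoc]
            _ ≤ 1 * |Ω m l| * 1 := by
                apply mul_le_mul (mul_le_mul (hv1 m) le_rfl (abs_nonneg _) zero_le_one)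
                  (hv1 l) (abs_nonneg _)
                positivity
            _ = |Ω m l| := by ring
  rcases eq_or_lt_of_le (Finset.sum_nonneg fun j (_ : j ∈ Finset.univ) => sq_nonneg (w j)) with
    h0 | hpos
  · have hw : ∀ j, w j = 0 := fun j =>
      (pow_eq_zero_iff two_ne_zero).1
        ((Finset.sum_eq_zero_iff_of_nonneg (fun i _ => sq_nonneg (w i))).1 h0.symm j
          (Finset.mem_univ j))
    simp [dotProduct, hw]
  · have hsne : (∑ j, w j ^ 2) ≠ 0 := ne_of_gt hpos
    have hv : ∑ i, ((Real.sqrt (∑ j, w j ^ 2))⁻¹ * w i) ^ 2 = 1 := by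
      have h : ∀ i : Fin n, ((Real.sqrt (∑ j, w j ^ 2))⁻¹ * w i) ^ 2
          = (Real.sqrt (∑ j, w j ^ 2))⁻¹ ^ 2 * w i ^ 2 := fun i => by ring
      simp_rw [h]
      rw [← Finset.mul_sum, inv_pow, Real.sq_sqrt hpos.le, inv_mul_cancel₀ hsne]
    have hle := le_ciSup hbdd ⟨fun i => (Real.sqrt (∑ j, w j ^ 2))⁻¹ * w i, hv⟩
    have hdot : ((fun i => (Real.sqrt (∑ j, w j ^ 2))⁻¹ * w i) ⬝ᵥ
          Ω.mulVec (fun i => (Real.sqrt (∑ j, w j ^ 2))⁻¹ * w i))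
        = (∑ j, w j ^ 2)⁻¹ * (w ⬝ᵥ Ω.mulVec w) := by
      simp only [dotProduct, mulVec, Finset.mul_sum]
      refine Finset.sum_congr rfl fun x _ => Finset.sum_congr rfl fun i _ => ?_
      have hinv : (Real.sqrt (∑ j, w j ^ 2))⁻¹ * (Real.sqrt (∑ j, w j ^ 2))⁻¹
          = (∑ j, w j ^ 2)⁻¹ := by
        rw [← mul_inv, Real.mul_self_sqrt hpos.le]
      calc (Real.sqrt (∑ j, w j ^ 2))⁻¹ * w x * (Ω x i * ((Real.sqrt (∑ j, w j ^ 2))⁻¹ * w i))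
          = (Real.sqrt (∑ j, w j ^ 2))⁻¹ * (Real.sqrt (∑ j, w j ^ 2))⁻¹
            * (w x * (Ω x i * w i)) := by ring
        _ = (∑ j, w j ^ 2)⁻¹ * (w x * (Ω x i * w i)) := by rw [hinv]
    have h2 : (∑ j, w j ^ 2)⁻¹ * (w ⬝ᵥ Ω.mulVec w) ≤ lamMax Ω := hdot ▸ hle
    calc w ⬝ᵥ Ω.mulVec w
        = (∑ j, w j ^ 2) * ((∑ j, w j ^ 2)⁻¹ * (w ⬝ᵥ Ω.mulVec w)) := by
          rw [← mul_assoc, mul_inv_cancel₀ hsne, one_mul]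
      _ ≤ (∑ j, w j ^ 2) * lamMax Ω := mul_le_mul_of_nonneg_left h2 hpos.le
      _ = lamMax Ω * ∑ j, w j ^ 2 := mul_comm _ _

end rayleigh

lemma trace_bound {n k : ℕ} (X : Matrix (Fin n) (Fin k) ℝ) (hX : IsUnit (Xᵀ * X).det)
    (Ω : Matrix (Fin n) (Fin n) ℝ) :
    Matrix.trace ((Xᵀ * X)⁻¹ * Xᵀ * Ω * X * (Xᵀ * X)⁻¹)
      ≤ Matrix.trace ((Xᵀ * X)⁻¹) * lamMax Ω := by
  set M := (Xᵀ * X)⁻¹ with hM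
  have hMsymm : Mᵀ = M := by
    rw [hM, Matrix.transpose_nonsing_inv, Matrix.transpose_mul, Matrix.transpose_transpose]
  set B := X * M with hB
  have hfact : M * Xᵀ * Ω * X * M = Bᵀ * (Ω * B) := by
    rw [hB, Matrix.transpose_mul, hMsymm]
    simp only [Matrix.mul_assoc]
  have hmain : Matrix.trace (M * Xᵀ * Ω * X * M) = ∑ i, (fun j => B j i) ⬝ᵥ Ω.mulVec (fun j => B j i) := by
    rw [hfact]
    refine Finset.sum_congr rfl fun i _ => ?_
    simp [Matrix.mul_apply, dotProduct, mulVec, Matrix.transpose_apply]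
  have htrM : Matrix.trace M = ∑ i, ∑ j, B j i ^ 2 := by
    have hBtB : Bᵀ * B = M := by
      rw [hB, Matrix.transpose_mul, hMsymm]
      calc M * Xᵀ * (X * M) = M * (Xᵀ * X * M) := by rw [Matrix.mul_assoc, Matrix.mul_assoc]
        _ = M * 1 := by rw [hM, Matrix.mul_nonsing_inv _ hX]
        _ = M := Matrix.mul_one M
    rw [← hBtB]
    simp [Matrix.trace, Matrix.diag, Matrix.mul_apply, sq]
  calc Matrix.trace (M * Xᵀ * Ω * X * M)
      = ∑ i, (fun j => B j i) ⬝ᵥ Ω.mulVec (fun j => B j i) := hmain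
    _ ≤ ∑ i, lamMax Ω * ∑ j, B j i ^ 2 :=
        Finset.sum_le_sum fun i _ => rayleigh_bound Ω _
    _ = lamMax Ω * ∑ i, ∑ j, B j i ^ 2 := by rw [Finset.mul_sum]
    _ = Matrix.trace M * lamMax Ω := by rw [htrM, mul_comm]

/-- finite-sample form of the paper's Theorem 5 and the
`√G`-consistency discussion.  In the fixed-design random coefficient clustered
model `Y_g = X_g β + X_g u_g + ε_g`, the cluster-average estimator is unbiased
for `β` and
`E‖β̂−β‖² = (1/G²)∑_g tr((X_gᵀX_g)⁻¹X_gᵀΩ_gX_g(X_gᵀX_g)⁻¹) + tr(Δ)/G`.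
Consequently, if `tr((X_gᵀX_g)⁻¹)·λ_max(Ω_g) ≤ K` for all `g`, then
`E‖β̂−β‖² ≤ (K + tr Δ)/G`, so `β̂ → β` in `L²` (hence in probability) as
`G → ∞`, for any within-cluster dependence and arbitrary cluster sizes. -/
theorem stmt9 {Ωs : Type*} [MeasurableSpace Ωs] (μ : Measure Ωs) [IsProbabilityMeasure μ]
    (k : ℕ) (β : Fin k → ℝ)
    (N : (G : ℕ) → Fin G → ℕ) (hN : ∀ G g, 1 ≤ N G g)
    (X : (G : ℕ) → (g : Fin G) → Matrix (Fin (N G g)) (Fin k) ℝ)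
    (hX : ∀ G g, IsUnit ((X G g)ᵀ * X G g).det)
    (ε : (G : ℕ) → (g : Fin G) → Ωs → (Fin (N G g) → ℝ))
    (u : (G : ℕ) → (g : Fin G) → Ωs → (Fin k → ℝ))
    (hmeasε : ∀ G g, Measurable (ε G g)) (hmeasu : ∀ G g, Measurable (u G g))
    (hL2ε : ∀ G g i, Integrable (fun ω => (ε G g ω i) ^ 2) μ)
    (hL2u : ∀ G g i, Integrable (fun ω => (u G g ω i) ^ 2) μ)
    (hmeanε : ∀ G g i, ∫ ω, ε G g ω i ∂μ = 0)
    (hmeanu : ∀ G g i, ∫ ω, u G g ω i ∂μ = 0)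
    (hindepε : ∀ G, iIndepFun (ε G) μ)
    (hindepu : ∀ G, iIndepFun (u G) μ)
    (hindepεu : ∀ G, IndepFun (fun ω (g : Fin G) => ε G g ω)
                              (fun ω (g : Fin G) => u G g ω) μ)
    (Ωm : (G : ℕ) → (g : Fin G) → Matrix (Fin (N G g)) (Fin (N G g)) ℝ)
    (hΩ : ∀ G g i j, Ωm G g i j = ∫ ω, ε G g ω i * ε G g ω j ∂μ)
    (Δ : Matrix (Fin k) (Fin k) ℝ) (hΔpd : Δ.PosDef)
    (hΔ : ∀ G g i j, ∫ ω, u G g ω i * u G g ω j ∂μ = Δ i j)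
    (betaHat : (G : ℕ) → Ωs → (Fin k → ℝ))
    (hbetaHat : ∀ G ω, betaHat G ω =
      (G : ℝ)⁻¹ • ∑ g, (((X G g)ᵀ * X G g)⁻¹).mulVec
        ((X G g)ᵀ.mulVec
          ((X G g).mulVec β + (X G g).mulVec (u G g ω) + ε G g ω))) :
    (∀ G : ℕ, 1 ≤ G → ∀ i, ∫ ω, betaHat G ω i ∂μ = β i) ∧
    (∀ G : ℕ, 1 ≤ G →
      ∫ ω, ∑ i, (betaHat G ω i - β i) ^ 2 ∂μ =
        ((G : ℝ) ^ 2)⁻¹ * (∑ g, Matrix.trace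
          (((X G g)ᵀ * X G g)⁻¹ * (X G g)ᵀ * Ωm G g * X G g * ((X G g)ᵀ * X G g)⁻¹))
        + Matrix.trace Δ / (G : ℝ)) ∧
    (∀ K : ℝ,
      (∀ G g, Matrix.trace (((X G g)ᵀ * X G g)⁻¹) * lamMax (Ωm G g) ≤ K) →
      (∀ G : ℕ, 1 ≤ G →
        ∫ ω, ∑ i, (betaHat G ω i - β i) ^ 2 ∂μ ≤ (K + Matrix.trace Δ) / (G : ℝ)) ∧
      Tendsto (fun G : ℕ => ∫ ω, ∑ i, (betaHat G ω i - β i) ^ 2 ∂μ) atTop (nhds 0) ∧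
      (∀ η : ℝ, 0 < η →
        Tendsto (fun G : ℕ => μ {ω | η ≤ Real.sqrt (∑ i, (betaHat G ω i - β i) ^ 2)})
          atTop (nhds 0))) := by
  classical
  -- === per-G machinery ===
  have key : ∀ G : ℕ, 1 ≤ G →
      (∀ i, ∫ ω, betaHat G ω i ∂μ = β i) ∧
      (∫ ω, ∑ i, (betaHat G ω i - β i) ^ 2 ∂μ =
        ((G : ℝ) ^ 2)⁻¹ * (∑ g, Matrix.trace
          (((X G g)ᵀ * X G g)⁻¹ * (X G g)ᵀ * Ωm G g * X G g * ((X G g)ᵀ * X G g)⁻¹))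
        + Matrix.trace Δ / (G : ℝ)) ∧
      Integrable (fun ω => ∑ i, (betaHat G ω i - β i) ^ 2) μ := by
    intro G hG
    have hGne : (G : ℝ) ≠ 0 := Nat.cast_ne_zero.mpr (by omega)
    set A : (g : Fin G) → Matrix (Fin k) (Fin (N G g)) ℝ :=
      fun g => ((X G g)ᵀ * X G g)⁻¹ * (X G g)ᵀ with hA
    set W : Fin G → Ωs → Fin k → ℝ :=
      fun g ω i => u G g ω i + ∑ m, A g i m * ε G g ω m with hW
    -- measurability of components
    have hmu : ∀ (g : Fin G) i, Measurable fun ω => u G g ω i :=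
      fun g i => (measurable_pi_apply i).comp (hmeasu G g)
    have hmε : ∀ (g : Fin G) j, Measurable fun ω => ε G g ω j :=
      fun g j => (measurable_pi_apply j).comp (hmeasε G g)
    -- integrability of products of primitives
    have hIuu : ∀ (g h : Fin G) i j, Integrable (fun ω => u G g ω i * u G h ω j) μ :=
      fun g h i j => intmul (hmu g i) (hmu h j) (hL2u G g i) (hL2u G h j)
    have hIεε : ∀ (g h : Fin G) i j, Integrable (fun ω => ε G g ω i * ε G h ω j) μ :=
      fun g h i j => intmul (hmε g i) (hmε h j) (hL2ε G g i) (hL2ε G h j)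
    have hIuε : ∀ (g h : Fin G) i j, Integrable (fun ω => u G g ω i * ε G h ω j) μ :=
      fun g h i j => intmul (hmu g i) (hmε h j) (hL2u G g i) (hL2ε G h j)
    have hIεu : ∀ (g h : Fin G) i j, Integrable (fun ω => ε G g ω i * u G h ω j) μ :=
      fun g h i j => intmul (hmε g i) (hmu h j) (hL2ε G g i) (hL2u G h j)
    have hIu1 : ∀ (g : Fin G) i, Integrable (fun ω => u G g ω i) μ :=
      fun g i => intone (hmu g i) (hL2u G g i)
    have hIε1 : ∀ (g : Fin G) j, Integrable (fun ω => ε G g ω j) μ :=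
      fun g j => intone (hmε g j) (hL2ε G g j)
    -- moment identities for primitives
    have hMuu : ∀ (g h : Fin G) i j, ∫ ω, u G g ω i * u G h ω j ∂μ =
        if g = h then Δ i j else 0 := by
      intro g h i j
      by_cases hgh : g = h
      · subst hgh; simp [hΔ G g i j]
      · simp only [hgh, if_false]
        have hind : IndepFun (fun ω => u G g ω i) (fun ω => u G h ω j) μ :=
          ((hindepu G).indepFun hgh).comp (measurable_pi_apply i) (measurable_pi_apply j)
        exact int_indep_zero hind (hIu1 g i) (hIu1 h j) (hmeanu G g i)
    have hMεεd : ∀ (g : Fin G) i j, ∫ ω, ε G g ω i * ε G g ω j ∂μ = Ωm G g i j :=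
      fun g i j => (hΩ G g i j).symm
    have hMεεo : ∀ (g h : Fin G), g ≠ h → ∀ i j, ∫ ω, ε G g ω i * ε G h ω j ∂μ = 0 := by
      intro g h hgh i j
      have hind : IndepFun (fun ω => ε G g ω i) (fun ω => ε G h ω j) μ :=
        ((hindepε G).indepFun hgh).comp (measurable_pi_apply i) (measurable_pi_apply j)
      exact int_indep_zero hind (hIε1 g i) (hIε1 h j) (hmeanε G g i)
    have hindεu : ∀ (g h : Fin G) i j,
        IndepFun (fun ω => ε G g ω i) (fun ω => u G h ω j) μ := by
      intro g h i j
      have := (hindepεu G).comp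
        (show Measurable fun v : (g' : Fin G) → Fin (N G g') → ℝ => v g i from
          (measurable_pi_apply i).comp (measurable_pi_apply g))
        (show Measurable fun v : Fin G → Fin k → ℝ => v h j from
          (measurable_pi_apply j).comp (measurable_pi_apply h))
      exact this
    have hMεu : ∀ (g h : Fin G) i j, ∫ ω, ε G g ω i * u G h ω j ∂μ = 0 :=
      fun g h i j => int_indep_zero (hindεu g h i j) (hIε1 g i) (hIu1 h j) (hmeanε G g i)
    have hMuε : ∀ (g h : Fin G) i j, ∫ ω, u G g ω i * ε G h ω j ∂μ = 0 :=
      fun g h i j =>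
        int_indep_zero (hindεu h g j i).symm (hIu1 g i) (hIε1 h j) (hmeanu G g i)
    -- expansion of W-products
    have hexp : ∀ (g h : Fin G) i j (ω : Ωs), W g ω i * W h ω j =
        u G g ω i * u G h ω j
        + ∑ m, A h j m * (u G g ω i * ε G h ω m)
        + ∑ m, A g i m * (ε G g ω m * u G h ω j)
        + ∑ m, ∑ l, A g i m * A h j l * (ε G g ω m * ε G h ω l) := by
      intro g h i j ω
      simp only [hW]
      have e1 : u G g ω i * (∑ l, A h j l * ε G h ω l)
          = ∑ m, A h j m * (u G g ω i * ε G h ω m) := by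
        rw [Finset.mul_sum]; exact Finset.sum_congr rfl fun m _ => by ring
      have e2 : (∑ m, A g i m * ε G g ω m) * u G h ω j
          = ∑ m, A g i m * (ε G g ω m * u G h ω j) := by
        rw [Finset.sum_mul]; exact Finset.sum_congr rfl fun m _ => by ring
      have e3 : (∑ m, A g i m * ε G g ω m) * (∑ l, A h j l * ε G h ω l)
          = ∑ m, ∑ l, A g i m * A h j l * (ε G g ω m * ε G h ω l) := by
        rw [Finset.sum_mul_sum]
        exact Finset.sum_congr rfl fun m _ => Finset.sum_congr rfl fun l _ => by ring
      rw [add_mul, mul_add, mul_add, e1, e2, e3]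
      ring
    -- integrability of W-products
    have hWprod_int : ∀ (g h : Fin G) i j,
        Integrable (fun ω => W g ω i * W h ω j) μ := by
      intro g h i j
      have : (fun ω => W g ω i * W h ω j) = fun ω =>
          u G g ω i * u G h ω j
          + ∑ m, A h j m * (u G g ω i * ε G h ω m)
          + ∑ m, A g i m * (ε G g ω m * u G h ω j)
          + ∑ m, ∑ l, A g i m * A h j l * (ε G g ω m * ε G h ω l) :=
        funext fun ω => hexp g h i j ω
      rw [this]
      refine (((hIuu g h i j).add ?_).add ?_).add ?_
      · exact integrable_finset_sum _ fun m _ => (hIuε g h i m).const_mul _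
      · exact integrable_finset_sum _ fun m _ => (hIεu g h m j).const_mul _
      · exact integrable_finset_sum _ fun m _ =>
          integrable_finset_sum _ fun l _ => (hIεε g h m l).const_mul _
    -- second moments of W
    have hWW : ∀ (g h : Fin G) i j, ∫ ω, W g ω i * W h ω j ∂μ =
        if g = h then Δ i j + (A g * Ωm G g * (A g)ᵀ) i j else 0 := by
      intro g h i j
      have hre : ∫ ω, W g ω i * W h ω j ∂μ =
          (∫ ω, u G g ω i * u G h ω j ∂μ)
          + (∑ m, A h j m * ∫ ω, u G g ω i * ε G h ω m ∂μ)
          + (∑ m, A g i m * ∫ ω, ε G g ω m * u G h ω j ∂μ)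
          + (∑ m, ∑ l, A g i m * A h j l * ∫ ω, ε G g ω m * ε G h ω l ∂μ) := by
        simp_rw [hexp g h i j]
        rw [integral_add, integral_add, integral_add]
        · congr 1
          · congr 1
            · congr 1
              · rw [integral_finset_sum _ fun m _ => (hIuε g h i m).const_mul _]
                exact Finset.sum_congr rfl fun m _ => integral_const_mul _ _
            · rw [integral_finset_sum _ fun m _ => (hIεu g h m j).const_mul _]
              exact Finset.sum_congr rfl fun m _ => integral_const_mul _ _
          · rw [integral_finset_sum _ fun m _ =>
              integrable_finset_sum _ fun l _ => (hIεε g h m l).const_mul _]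
            refine Finset.sum_congr rfl fun m _ => ?_
            rw [integral_finset_sum _ fun l _ => (hIεε g h m l).const_mul _]
            exact Finset.sum_congr rfl fun l _ => integral_const_mul _ _
        · exact hIuu g h i j
        · exact integrable_finset_sum _ fun m _ => (hIuε g h i m).const_mul _
        · exact (hIuu g h i j).add
            (integrable_finset_sum _ fun m _ => (hIuε g h i m).const_mul _)
        · exact integrable_finset_sum _ fun m _ => (hIεu g h m j).const_mul _
        · exact ((hIuu g h i j).add
            (integrable_finset_sum _ fun m _ => (hIuε g h i m).const_mul _)).add
            (integrable_finset_sum _ fun m _ => (hIεu g h m j).const_mul _)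
        · exact integrable_finset_sum _ fun m _ =>
            integrable_finset_sum _ fun l _ => (hIεε g h m l).const_mul _
      rw [hre]
      simp only [hMuε, hMεu, mul_zero, Finset.sum_const_zero, add_zero]
      by_cases hgh : g = h
      · subst hgh
        rw [hMuu g g i j, if_pos rfl, if_pos rfl]
        simp_rw [hMεεd g]
        congr 1
        rw [Finset.sum_comm]
        simp only [Matrix.mul_apply, Matrix.transpose_apply, Finset.sum_mul]
        refine Finset.sum_congr rfl fun l _ => Finset.sum_congr rfl fun m _ => by ring
      · rw [hMuu g h i j, if_neg hgh, if_neg hgh]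
        simp_rw [hMεεo g h hgh]
        simp
    -- mean and integrability of W components
    have hWint1 : ∀ (g : Fin G) i, Integrable (fun ω => W g ω i) μ := by
      intro g i
      simp only [hW]
      exact (hIu1 g i).add (integrable_finset_sum _ fun m _ => (hIε1 g m).const_mul _)
    have hWmean : ∀ (g : Fin G) i, ∫ ω, W g ω i ∂μ = 0 := by
      intro g i
      simp only [hW]
      rw [integral_add (hIu1 g i)
        (integrable_finset_sum _ fun m _ => (hIε1 g m).const_mul _), hmeanu G g i,
        integral_finset_sum _ fun m _ => (hIε1 g m).const_mul _]
      simp [integral_const_mul, hmeanε G g]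
    -- representation
    have hrepr : ∀ ω i, betaHat G ω i - β i = (G : ℝ)⁻¹ * ∑ g, W g ω i := by
      intro ω i
      rw [hbetaHat]
      have hterm : ∀ g : Fin G,
          (((X G g)ᵀ * X G g)⁻¹ *ᵥ ((X G g)ᵀ *ᵥ
            (X G g *ᵥ β + X G g *ᵥ u G g ω + ε G g ω))) i = β i + W g ω i := by
        intro g
        have h1 : ((X G g)ᵀ * X G g)⁻¹ * ((X G g)ᵀ * X G g) = 1 :=
          Matrix.nonsing_inv_mul _ (hX G g)
        simp only [Matrix.mulVec_add, Matrix.mulVec_mulVec, Matrix.mul_assoc, h1,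
          Matrix.one_mulVec]
        simp only [hW, hA, Pi.add_apply, Matrix.mulVec, dotProduct, Matrix.mul_assoc]
        ring
      simp only [Pi.smul_apply, Finset.sum_apply, smul_eq_mul]
      rw [Finset.sum_congr rfl fun g _ => hterm g, Finset.sum_add_distrib,
        Finset.sum_const, Finset.card_univ, Fintype.card_fin, nsmul_eq_mul]
      field_simp
      ring
    -- unbiasedness
    have hunb : ∀ i, ∫ ω, betaHat G ω i ∂μ = β i := by
      intro i
      have heq : (fun ω => betaHat G ω i) =
          fun ω => β i + (G : ℝ)⁻¹ * ∑ g, W g ω i := by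
        funext ω
        have := hrepr ω i
        linarith
      rw [heq, integral_add (integrable_const _)
        (((integrable_finset_sum _ fun g _ => hWint1 g i)).const_mul _),
        integral_const, integral_const_mul,
        integral_finset_sum _ fun g _ => hWint1 g i]
      simp [hWmean]
    -- MSE function rewrite
    have hSfun : (fun ω => ∑ i, (betaHat G ω i - β i) ^ 2) =
        fun ω => ∑ i, ((G : ℝ) ^ 2)⁻¹ * (∑ g, ∑ h, W g ω i * W h ω i) := by
      funext ω
      refine Finset.sum_congr rfl fun i _ => ?_
      rw [hrepr ω i, mul_pow, inv_pow, pow_two (∑ g, W g ω i), Finset.sum_mul_sum]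
    have hSint : Integrable (fun ω => ∑ i, (betaHat G ω i - β i) ^ 2) μ := by
      rw [hSfun]
      exact integrable_finset_sum _ fun i _ =>
        ((integrable_finset_sum _ fun g _ =>
          integrable_finset_sum _ fun h _ => hWprod_int g h i i).const_mul _)
    -- the matrices match
    have hPg : ∀ g : Fin G, A g * Ωm G g * (A g)ᵀ =
        ((X G g)ᵀ * X G g)⁻¹ * (X G g)ᵀ * Ωm G g * X G g * ((X G g)ᵀ * X G g)⁻¹ := by
      intro g
      have hMsymm : (((X G g)ᵀ * X G g)⁻¹)ᵀ = ((X G g)ᵀ * X G g)⁻¹ := by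
        rw [Matrix.transpose_nonsing_inv, Matrix.transpose_mul, Matrix.transpose_transpose]
      simp only [hA, Matrix.transpose_mul, Matrix.transpose_transpose, hMsymm]
      simp only [Matrix.mul_assoc]
    -- the MSE identity
    have hMSE : ∫ ω, ∑ i, (betaHat G ω i - β i) ^ 2 ∂μ =
        ((G : ℝ) ^ 2)⁻¹ * (∑ g, Matrix.trace
          (((X G g)ᵀ * X G g)⁻¹ * (X G g)ᵀ * Ωm G g * X G g * ((X G g)ᵀ * X G g)⁻¹))
        + Matrix.trace Δ / (G : ℝ) := by
      rw [hSfun, integral_finset_sum _ fun i _ =>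
        ((integrable_finset_sum _ fun g _ =>
          integrable_finset_sum _ fun h _ => hWprod_int g h i i).const_mul _)]
      have hstep : ∀ i : Fin k,
          ∫ ω, ((G : ℝ) ^ 2)⁻¹ * (∑ g, ∑ h, W g ω i * W h ω i) ∂μ =
          ((G : ℝ) ^ 2)⁻¹ * ∑ g : Fin G, (Δ i i + (A g * Ωm G g * (A g)ᵀ) i i) := by
        intro i
        rw [integral_const_mul, integral_finset_sum _ fun g _ =>
          integrable_finset_sum _ fun h _ => hWprod_int g h i i]
        congr 1
        refine Finset.sum_congr rfl fun g _ => ?_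
        rw [integral_finset_sum _ fun h _ => hWprod_int g h i i]
        simp_rw [hWW g]
        rw [Finset.sum_ite_eq]
        simp
      rw [Finset.sum_congr rfl fun i _ => hstep i, ← Finset.mul_sum]
      have halg : ∑ i : Fin k, ∑ g : Fin G, (Δ i i + (A g * Ωm G g * (A g)ᵀ) i i) =
          (∑ g : Fin G, Matrix.trace
          (((X G g)ᵀ * X G g)⁻¹ * (X G g)ᵀ * Ωm G g * X G g * ((X G g)ᵀ * X G g)⁻¹))
          + (G : ℝ) * Matrix.trace Δ := by
        simp only [Finset.sum_add_distrib]
        rw [add_comm]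
        congr 1
        · rw [Finset.sum_comm]
          refine Finset.sum_congr rfl fun g _ => ?_
          rw [← hPg g]
          simp [Matrix.trace, Matrix.diag]
        · simp only [Finset.sum_const, Finset.card_univ, Fintype.card_fin, nsmul_eq_mul]
          rw [← Finset.mul_sum]
          simp [Matrix.trace, Matrix.diag]
      rw [halg]
      field_simp
    exact ⟨hunb, hMSE, hSint⟩
  refine ⟨fun G hG => (key G hG).1, fun G hG => (key G hG).2.1, ?_⟩
  intro K hK
  have hnn : ∀ G : ℕ, 0 ≤ ∫ ω, ∑ i, (betaHat G ω i - β i) ^ 2 ∂μ := fun G =>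
    integral_nonneg fun ω => Finset.sum_nonneg fun i _ => sq_nonneg _
  have hbound : ∀ G : ℕ, 1 ≤ G →
      ∫ ω, ∑ i, (betaHat G ω i - β i) ^ 2 ∂μ ≤ (K + Matrix.trace Δ) / (G : ℝ) := by
    intro G hG
    have hGpos : (0 : ℝ) < (G : ℝ) := by exact_mod_cast hG
    rw [(key G hG).2.1]
    have htr : ∀ g : Fin G, Matrix.trace
        (((X G g)ᵀ * X G g)⁻¹ * (X G g)ᵀ * Ωm G g * X G g * ((X G g)ᵀ * X G g)⁻¹) ≤ K :=
      fun g => le_trans (trace_bound (X G g) (hX G g) (Ωm G g)) (hK G g)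
    have hsum : (∑ g : Fin G, Matrix.trace
        (((X G g)ᵀ * X G g)⁻¹ * (X G g)ᵀ * Ωm G g * X G g * ((X G g)ᵀ * X G g)⁻¹))
        ≤ (G : ℝ) * K := by
      calc _ ≤ ∑ _g : Fin G, K := Finset.sum_le_sum fun g _ => htr g
        _ = (G : ℝ) * K := by
            rw [Finset.sum_const, Finset.card_univ, Fintype.card_fin, nsmul_eq_mul]
    have h1 : ((G : ℝ) ^ 2)⁻¹ * (∑ g : Fin G, Matrix.trace
        (((X G g)ᵀ * X G g)⁻¹ * (X G g)ᵀ * Ωm G g * X G g * ((X G g)ᵀ * X G g)⁻¹))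
        ≤ ((G : ℝ) ^ 2)⁻¹ * ((G : ℝ) * K) :=
      mul_le_mul_of_nonneg_left hsum (by positivity)
    have h2 : ((G : ℝ) ^ 2)⁻¹ * ((G : ℝ) * K) = K / (G : ℝ) := by
      field_simp
    have h3 : (K + Matrix.trace Δ) / (G : ℝ) = K / (G : ℝ) + Matrix.trace Δ / (G : ℝ) :=
      add_div _ _ _
    linarith
  have htend : Tendsto (fun G : ℕ => ∫ ω, ∑ i, (betaHat G ω i - β i) ^ 2 ∂μ)
      atTop (nhds 0) := by
    refine tendsto_of_tendsto_of_tendsto_of_le_of_le' tendsto_const_nhds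
      (tendsto_const_div_atTop_nhds_zero_nat (K + Matrix.trace Δ)) ?_ ?_
    · exact Eventually.of_forall fun G => hnn G
    · filter_upwards [eventually_ge_atTop 1] with G hG using hbound G hG
  refine ⟨hbound, htend, ?_⟩
  intro η hη
  have hη2 : (0 : ℝ) < η ^ 2 := by positivity
  refine tendsto_of_tendsto_of_tendsto_of_le_of_le' tendsto_const_nhds
    (show Tendsto (fun G : ℕ => ENNReal.ofReal
      ((∫ ω, ∑ i, (betaHat G ω i - β i) ^ 2 ∂μ) / η ^ 2)) atTop (nhds 0) from by
        simpa using ENNReal.tendsto_ofReal (htend.div_const (η ^ 2))) ?_ ?_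
  · exact Eventually.of_forall fun G => zero_le
  · filter_upwards [eventually_ge_atTop 1] with G hG
    have hSint := (key G hG).2.2
    have hSnn : ∀ ω, (0 : ℝ) ≤ ∑ i, (betaHat G ω i - β i) ^ 2 := fun ω =>
      Finset.sum_nonneg fun i _ => sq_nonneg _
    have hset : {ω | η ≤ Real.sqrt (∑ i, (betaHat G ω i - β i) ^ 2)} =
        {ω | η ^ 2 ≤ ∑ i, (betaHat G ω i - β i) ^ 2} := by
      ext ω
      simp only [Set.mem_setOf_eq]
      rw [Real.le_sqrt hη.le (hSnn ω)]
    have hmark := mul_meas_ge_le_integral_of_nonneg (ae_of_all μ hSnn) hSint (η ^ 2)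
    have h1 : (μ {ω | η ^ 2 ≤ ∑ i, (betaHat G ω i - β i) ^ 2}).toReal ≤
        (∫ ω, ∑ i, (betaHat G ω i - β i) ^ 2 ∂μ) / η ^ 2 := by
      rw [le_div_iff₀ hη2]
      unfold Measure.real at hmark
      linarith [hmark]
    calc μ {ω | η ≤ Real.sqrt (∑ i, (betaHat G ω i - β i) ^ 2)}
        = μ {ω | η ^ 2 ≤ ∑ i, (betaHat G ω i - β i) ^ 2} := by rw [hset]
      _ = ENNReal.ofReal ((μ {ω | η ^ 2 ≤ ∑ i, (betaHat G ω i - β i) ^ 2}).toReal) :=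
          (ENNReal.ofReal_toReal (measure_ne_top μ _)).symm
      _ ≤ ENNReal.ofReal ((∫ ω, ∑ i, (betaHat G ω i - β i) ^ 2 ∂μ) / η ^ 2) :=
          ENNReal.ofReal_le_ofReal h1
end

section
/- Let a_1, …, a_G be positive reals, let x_g ∈ ℝ^{N_g} be fixed vectors with ‖x_g‖² = a_g, and let ε_1,…,ε_G be mutually independent mean-zero random vectors with Cov(ε_g) = a_g · I_{N_g}. For Y_g = β x_g + ε_g (β ∈ ℝ fixed), define β̂ = (1/G) Σ_{g=1}^G x_gᵀY_g/a_g and β̂_POLS = (Σ_{g=1}^G x_gᵀY_g)/(Σ_{g=1}^G a_g). Then Var(β̂) = 1/G and Var(β̂_POLS) = (Σ_{g=1}^G a_g²)/(Σ_{g=1}^G a_g)², and Var(β̂) ≤ Var(β̂_POLS), with strict inequality whenever the a_g are not all equal. -/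
open MeasureTheory ProbabilityTheory Finset

/-! With `Z_g = x_gᵀ ε_g`, the isotropic covariance inside a cluster gives
`Var Z_g = a_g ‖x_g‖² = a_g²`, and independence across clusters makes the `Z_g` uncorrelated.
Both estimators are a constant plus `∑ c_g Z_g`, hence have variance `∑ c_g² a_g²`: this is `1/G`
for `c_g = 1/(G a_g)` and `∑ a_g² / (∑ a_g)²` for `c_g = 1/∑ a`. Comparing them is Cauchy–Schwarz
`(∑ a_g)² ≤ G ∑ a_g²`, which is strict unless all `a_g` agree since
`∑_{g,g'} (a_g - a_g')² = 2 (G ∑ a_g² - (∑ a_g)²)`. -/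

lemma sum_mul_mul_add {ι R : Type*} [Fintype ι] [CommRing R] (x e : ι → R) (β : R) :
    ∑ i, x i * (β * x i + e i) = β * ∑ i, x i ^ 2 + ∑ i, x i * e i := by
  simp only [mul_add, sum_add_distrib, mul_sum]
  congr 1
  exact sum_congr rfl fun i _ ↦ by ring

lemma sum_sum_sub_sq_eq {ι R : Type*} [Fintype ι] [CommRing R] (f : ι → R) :
    ∑ i, ∑ j, (f i - f j) ^ 2 = 2 * (Fintype.card ι * ∑ i, f i ^ 2 - (∑ i, f i) ^ 2) := by
  simp only [sub_sq', sum_add_distrib, sum_sub_distrib, sum_const, card_univ, nsmul_eq_mul,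
    ← mul_sum, ← sum_mul]
  ring

lemma sq_sum_lt_card_mul_sum_sq {ι R : Type*} [Fintype ι] [CommRing R] [LinearOrder R]
    [IsStrictOrderedRing R] {f : ι → R} {i j : ι} (hij : f i ≠ f j) :
    (∑ i, f i) ^ 2 < Fintype.card ι * ∑ i, f i ^ 2 := by
  have hpos : 0 < ∑ i, ∑ j, (f i - f j) ^ 2 :=
    sum_pos' (fun _ _ ↦ sum_nonneg fun _ _ ↦ sq_nonneg _)
      ⟨i, mem_univ _, sum_pos' (fun _ _ ↦ sq_nonneg _)
        ⟨j, mem_univ _, sq_pos_of_ne_zero (sub_ne_zero.2 hij)⟩⟩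
  linarith [sum_sum_sub_sq_eq f]

section Comparison

variable {ι K : Type*} [Fintype ι] [Nonempty ι] [Field K] [LinearOrder K] [IsStrictOrderedRing K]
  {f : ι → K}

lemma inv_card_le_sum_sq_div_sq_sum (hf : ∑ i, f i ≠ 0) :
    (Fintype.card ι : K)⁻¹ ≤ (∑ i, f i ^ 2) / (∑ i, f i) ^ 2 := by
  rw [inv_eq_one_div, div_le_div_iff₀ (by positivity) (by positivity), one_mul, mul_comm]
  simpa using sq_sum_le_card_mul_sum_sq (s := univ) (f := f)

lemma inv_card_lt_sum_sq_div_sq_sum (hf : ∑ i, f i ≠ 0) {i j : ι} (hij : f i ≠ f j) :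
    (Fintype.card ι : K)⁻¹ < (∑ i, f i ^ 2) / (∑ i, f i) ^ 2 := by
  rw [inv_eq_one_div, div_lt_div_iff₀ (by positivity) (by positivity), one_mul, mul_comm]
  exact sq_sum_lt_card_mul_sum_sq hij

end Comparison

section Covariance

variable {Ω ι : Type*} [MeasurableSpace Ω] {μ : Measure Ω}

lemma covariance_eq_integral_mul_of_integral_eq_zero [IsProbabilityMeasure μ] {X Y : Ω → ℝ}
    (hX : MemLp X 2 μ) (hY : MemLp Y 2 μ) (hX₀ : μ[X] = 0) : cov[X, Y; μ] = ∫ ω, X ω * Y ω ∂μ := by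
  rw [covariance_eq_sub hX hY, hX₀, zero_mul, sub_zero, Pi.mul_def]

lemma variance_fun_sum_mul_of_covariance_eq_ite [IsFiniteMeasure μ] [Fintype ι] [DecidableEq ι]
    {X : ι → Ω → ℝ}
    (hX : ∀ i, MemLp (X i) 2 μ) {v : ι → ℝ}
    (hcov : ∀ i j, cov[X i, X j; μ] = if i = j then v i else 0) (c : ι → ℝ) :
    Var[fun ω ↦ ∑ i, c i * X i ω; μ] = ∑ i, c i ^ 2 * v i := by
  rw [variance_fun_sum fun i ↦ (hX i).const_mul (c i)]
  simp only [covariance_const_mul_left, covariance_const_mul_right, hcov, mul_ite, mul_zero,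
    sum_ite_eq, mem_univ, if_true]
  exact sum_congr rfl fun i _ ↦ by ring

lemma variance_const_add_sum_mul_of_covariance_eq_ite [IsProbabilityMeasure μ] [Fintype ι]
    [DecidableEq ι] {X : ι → Ω → ℝ} (hX : ∀ i, MemLp (X i) 2 μ) {v : ι → ℝ}
    (hcov : ∀ i j, cov[X i, X j; μ] = if i = j then v i else 0) (κ : ℝ) (c : ι → ℝ) :
    Var[fun ω ↦ κ + ∑ i, c i * X i ω; μ] = ∑ i, c i ^ 2 * v i := by
  rw [variance_const_add (memLp_finsetSum _ fun i _ ↦ (hX i).const_mul (c i)).1,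
    variance_fun_sum_mul_of_covariance_eq_ite hX hcov]

lemma covariance_weighted_sum_of_iIndepFun [IsProbabilityMeasure μ] {κ : ι → Type*}
    [∀ g, Fintype (κ g)] [∀ g, DecidableEq (κ g)] [DecidableEq ι] {ε : (g : ι) → Ω → κ g → ℝ}
    (hL2 : ∀ g i, MemLp (fun ω ↦ ε g ω i) 2 μ) (hmean : ∀ g i, ∫ ω, ε g ω i ∂μ = 0)
    {s : ι → ℝ} (hcov : ∀ g i j, ∫ ω, ε g ω i * ε g ω j ∂μ = if i = j then s g else 0)
    (hindep : iIndepFun ε μ) (x : (g : ι) → κ g → ℝ) (g g' : ι) :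
    cov[fun ω ↦ ∑ i, x g i * ε g ω i, fun ω ↦ ∑ i, x g' i * ε g' ω i; μ] =
      if g = g' then s g * ∑ i, x g i ^ 2 else 0 := by
  have hZ (g : ι) : MemLp (fun ω ↦ ∑ i, x g i * ε g ω i) 2 μ :=
    memLp_finsetSum _ fun i _ ↦ (hL2 g i).const_mul (x g i)
  split_ifs with h
  · subst h
    have hεcov (i j : κ g) : cov[fun ω ↦ ε g ω i, fun ω ↦ ε g ω j; μ] =
        if i = j then s g else 0 := by
      rw [covariance_eq_integral_mul_of_integral_eq_zero (hL2 g i) (hL2 g j) (hmean g i), hcov]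
    rw [covariance_self (hZ g).aemeasurable,
      variance_fun_sum_mul_of_covariance_eq_ite (hL2 g) hεcov, mul_sum]
    exact sum_congr rfl fun i _ ↦ mul_comm _ _
  · have hφ (g : ι) : Measurable fun v : κ g → ℝ ↦ ∑ i, x g i * v i := by fun_prop
    exact ((hindep.indepFun h).comp (hφ g) (hφ g')).covariance_eq_zero (hZ g) (hZ g')

end Covariance

section ClusterEstimators

variable {Ω ι : Type*} [MeasurableSpace Ω] {μ : Measure Ω} [IsProbabilityMeasure μ]
  [Fintype ι] [DecidableEq ι] {Z : ι → Ω → ℝ} {a : ι → ℝ}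

lemma variance_clusterAverage [Nonempty ι] (hZ : ∀ g, MemLp (Z g) 2 μ)
    (hcov : ∀ g g', cov[Z g, Z g'; μ] = if g = g' then a g ^ 2 else 0) (ha : ∀ g, a g ≠ 0)
    (β : ℝ) :
    Var[fun ω ↦ (Fintype.card ι : ℝ)⁻¹ * ∑ g, (β * a g + Z g ω) / a g; μ] =
      (Fintype.card ι : ℝ)⁻¹ := by
  set n : ℝ := (Fintype.card ι : ℝ)
  have hn : n ≠ 0 := Nat.cast_ne_zero.2 Fintype.card_ne_zero
  have hcl (g : ι) (ω : Ω) : (β * a g + Z g ω) / a g = β + (a g)⁻¹ * Z g ω := by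
    field_simp [ha g]
  have hrepr : (fun ω ↦ n⁻¹ * ∑ g, (β * a g + Z g ω) / a g) =
      fun ω ↦ n⁻¹ * ∑ _g : ι, β + ∑ g, (n⁻¹ * (a g)⁻¹) * Z g ω := by
    funext ω
    simp only [hcl, sum_add_distrib, mul_add, mul_sum, mul_assoc]
  have hterm (g : ι) : (n⁻¹ * (a g)⁻¹) ^ 2 * a g ^ 2 = (n ^ 2)⁻¹ := by
    field_simp [ha g]
  rw [hrepr, variance_const_add_sum_mul_of_covariance_eq_ite hZ hcov]
  simp only [hterm, sum_const, card_univ, nsmul_eq_mul]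
  change n * (n ^ 2)⁻¹ = n⁻¹
  field_simp

lemma variance_pooled (hZ : ∀ g, MemLp (Z g) 2 μ)
    (hcov : ∀ g g', cov[Z g, Z g'; μ] = if g = g' then a g ^ 2 else 0) (β : ℝ) :
    Var[fun ω ↦ (∑ g, (β * a g + Z g ω)) / ∑ g, a g; μ] = (∑ g, a g ^ 2) / (∑ g, a g) ^ 2 := by
  have hrepr : (fun ω ↦ (∑ g, (β * a g + Z g ω)) / ∑ g, a g) =
      fun ω ↦ (∑ g, β * a g) / ∑ g, a g + ∑ g, (∑ g, a g)⁻¹ * Z g ω := by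
    funext ω
    rw [sum_add_distrib, add_div, div_eq_inv_mul (∑ g, Z g ω), mul_sum]
  rw [hrepr, variance_const_add_sum_mul_of_covariance_eq_ite hZ hcov, ← mul_sum, inv_pow,
    ← div_eq_inv_mul]

end ClusterEstimators

theorem stmt10_general {Ωs : Type*} [MeasurableSpace Ωs] (μ : Measure Ωs) [IsProbabilityMeasure μ]
    (G : ℕ) (hG : 1 ≤ G) (N : Fin G → ℕ)
    (a : Fin G → ℝ) (ha : ∀ g, 0 < a g)
    (x : (g : Fin G) → Fin (N g) → ℝ) (hx : ∀ g, ∑ i, (x g i) ^ 2 = a g)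
    (β : ℝ)
    (ε : (g : Fin G) → Ωs → (Fin (N g) → ℝ))
    (hmeas : ∀ g, Measurable (ε g))
    (hL2 : ∀ g i, Integrable (fun ω => (ε g ω i) ^ 2) μ)
    (hmean : ∀ g i, ∫ ω, ε g ω i ∂μ = 0)
    (hCov : ∀ g i j, ∫ ω, ε g ω i * ε g ω j ∂μ = if i = j then a g else 0)
    (hindep : iIndepFun ε μ)
    (betaHat : Ωs → ℝ)
    (hbetaHat : ∀ ω, betaHat ω =
      (G : ℝ)⁻¹ * ∑ g, (∑ i, x g i * (β * x g i + ε g ω i)) / a g)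
    (betaPOLS : Ωs → ℝ)
    (hbetaPOLS : ∀ ω, betaPOLS ω =
      (∑ g, ∑ i, x g i * (β * x g i + ε g ω i)) / ∑ g, a g) :
    variance betaHat μ = ((G : ℝ))⁻¹ ∧
    variance betaPOLS μ = (∑ g, (a g) ^ 2) / (∑ g, a g) ^ 2 ∧
    variance betaHat μ ≤ variance betaPOLS μ ∧
    ((∃ g g' : Fin G, a g ≠ a g') → variance betaHat μ < variance betaPOLS μ) := by
  have : Nonempty (Fin G) := ⟨⟨0, hG⟩⟩
  have hεL2 (g i) : MemLp (fun ω ↦ ε g ω i) 2 μ :=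
    (memLp_two_iff_integrable_sq (hmeas g).eval.aestronglyMeasurable).2 (hL2 g i)
  have hZL2 (g) : MemLp (fun ω ↦ ∑ i, x g i * ε g ω i) 2 μ :=
    memLp_finsetSum _ fun i _ ↦ (hεL2 g i).const_mul (x g i)
  have hZcov (g g') : cov[fun ω ↦ ∑ i, x g i * ε g ω i, fun ω ↦ ∑ i, x g' i * ε g' ω i; μ] =
      if g = g' then a g ^ 2 else 0 := by
    rw [covariance_weighted_sum_of_iIndepFun hεL2 hmean hCov hindep, hx, sq]
  have hHat : betaHat = fun ω ↦ (G : ℝ)⁻¹ * ∑ g, (β * a g + ∑ i, x g i * ε g ω i) / a g :=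
    funext fun ω ↦ by simp only [hbetaHat, sum_mul_mul_add, hx]
  have hPOLS : betaPOLS = fun ω ↦ (∑ g, (β * a g + ∑ i, x g i * ε g ω i)) / ∑ g, a g :=
    funext fun ω ↦ by simp only [hbetaPOLS, sum_mul_mul_add, hx]
  have hVH : Var[betaHat; μ] = (G : ℝ)⁻¹ := by
    simpa [hHat] using variance_clusterAverage hZL2 hZcov (fun g ↦ (ha g).ne') β
  have hVP : Var[betaPOLS; μ] = (∑ g, a g ^ 2) / (∑ g, a g) ^ 2 :=
    hPOLS ▸ variance_pooled hZL2 hZcov β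
  have hS : ∑ g, a g ≠ 0 := (sum_pos (fun g _ ↦ ha g) univ_nonempty).ne'
  refine ⟨hVH, hVP, ?_, fun ⟨g, g', hne⟩ ↦ ?_⟩ <;> rw [hVH, hVP]
  · simpa using inv_card_le_sum_sq_div_sq_sum hS
  · simpa using inv_card_lt_sum_sq_div_sq_sum hS hne

/-- paper's Result 1, scalar-regressor case.
With `Ω_g = a_g I_{N_g}` and `‖x_g‖² = a_g`, the cluster-average estimator has
variance `1/G`, the pooled OLS estimator has variance `(∑ a_g²)/(∑ a_g)²`, and
`Var(β̂) ≤ Var(β̂_POLS)`, strictly whenever the `a_g` are not all equal. -/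
theorem stmt10 {Ωs : Type*} [MeasurableSpace Ωs] (μ : Measure Ωs) [IsProbabilityMeasure μ]
    (G : ℕ) (hG : 1 ≤ G) (N : Fin G → ℕ) (hN : ∀ g, 1 ≤ N g)
    (a : Fin G → ℝ) (ha : ∀ g, 0 < a g)
    (x : (g : Fin G) → Fin (N g) → ℝ) (hx : ∀ g, ∑ i, (x g i) ^ 2 = a g)
    (β : ℝ)
    (ε : (g : Fin G) → Ωs → (Fin (N g) → ℝ))
    (hmeas : ∀ g, Measurable (ε g))
    (hL2 : ∀ g i, Integrable (fun ω => (ε g ω i) ^ 2) μ)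
    (hmean : ∀ g i, ∫ ω, ε g ω i ∂μ = 0)
    (hCov : ∀ g i j, ∫ ω, ε g ω i * ε g ω j ∂μ = if i = j then a g else 0)
    (hindep : iIndepFun ε μ)
    (betaHat : Ωs → ℝ)
    (hbetaHat : ∀ ω, betaHat ω =
      (G : ℝ)⁻¹ * ∑ g, (∑ i, x g i * (β * x g i + ε g ω i)) / a g)
    (betaPOLS : Ωs → ℝ)
    (hbetaPOLS : ∀ ω, betaPOLS ω =
      (∑ g, ∑ i, x g i * (β * x g i + ε g ω i)) / ∑ g, a g) :
    variance betaHat μ = ((G : ℝ))⁻¹ ∧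
    variance betaPOLS μ = (∑ g, (a g) ^ 2) / (∑ g, a g) ^ 2 ∧
    variance betaHat μ ≤ variance betaPOLS μ ∧
    ((∃ g g' : Fin G, a g ≠ a g') → variance betaHat μ < variance betaPOLS μ) :=
  stmt10_general μ G hG N a ha x hx β ε hmeas hL2 hmean hCov hindep betaHat hbetaHat betaPOLS
    hbetaPOLS
end

section
/- In the intercept-only equicorrelated model with 0 < b < a and integer cluster sizes N_g ≥ 1, the variance formulas imply Var(β̂) ≤ a/G and Var(β̂_POLS) ≥ b · (max_g N_g / Σ_g N_g)². Consequently, along any sequence of such models in which G → ∞ and the largest cluster retains a share of observations bounded below, max_g N_g ≥ δ · Σ_g N_g for a fixed δ > 0, one has Var(β̂) → 0 while Var(β̂_POLS) ≥ b δ² > 0 for every G; in particular the cluster-average estimator is asymptotically more efficient than POLS. -/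
/-! Since every `N_g ≥ 1`, `∑ 1/N_g ≤ G`, which gives `v̂ ≤ a/G → 0`. For POLS, `∑ N_g² ≥ N_g²`
makes the `b`-term alone at least `b (N_g/∑N)²`, and a dominant cluster keeps this above `bδ²`. -/

open Filter Finset

section

variable {ι : Type*}

lemma sum_inv_le_card_of_one_le (s : Finset ι) {f : ι → ℝ} (hf : ∀ i ∈ s, 1 ≤ f i) :
    ∑ i ∈ s, (f i)⁻¹ ≤ #s := by
  simpa using sum_le_card_nsmul s _ 1 fun i hi => inv_le_one_of_one_le₀ (hf i hi)

lemma sq_div_sum_le_sum_sq_div_sq {s : Finset ι} (f : ι → ℝ) {i : ι} (hi : i ∈ s) :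
    (f i / ∑ j ∈ s, f j) ^ 2 ≤ (∑ j ∈ s, f j ^ 2) / (∑ j ∈ s, f j) ^ 2 := by
  rw [div_pow]
  exact div_le_div_of_nonneg_right
    (single_le_sum (f := fun j => f j ^ 2) (fun j _ => sq_nonneg (f j)) hi) (sq_nonneg _)

end

lemma clusterAvgVar_nonneg {a b x S : ℝ} (hb : 0 ≤ b) (hba : b ≤ a) (hx : 0 ≤ x)
    (hS : 0 ≤ S) : 0 ≤ (a - b) / x ^ 2 * S + b / x :=
  add_nonneg (mul_nonneg (div_nonneg (sub_nonneg.2 hba) (sq_nonneg x)) hS) (div_nonneg hb hx)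

lemma clusterAvgVar_le {a b x S : ℝ} (hba : b ≤ a) (hx : 0 < x) (hS : S ≤ x) :
    (a - b) / x ^ 2 * S + b / x ≤ a / x :=
  calc (a - b) / x ^ 2 * S + b / x ≤ (a - b) / x ^ 2 * x + b / x := by gcongr
    _ = a / x := by field_simp; ring

lemma mul_sq_div_le_pooledVar {a b n S Q : ℝ} (hb : 0 ≤ b) (hba : b ≤ a) (hS : 0 ≤ S)
    (hn : (n / S) ^ 2 ≤ Q / S ^ 2) :
    b * (n / S) ^ 2 ≤ (a - b) / S + b * Q / S ^ 2 := by
  rw [mul_div_assoc]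
  exact le_add_of_nonneg_of_le (div_nonneg (sub_nonneg.2 hba) hS)
    (mul_le_mul_of_nonneg_left hn hb)

lemma sq_le_sq_div_of_mul_le {δ n S : ℝ} (hδ : 0 ≤ δ) (hS : 0 < S) (h : δ * S ≤ n) :
    δ ^ 2 ≤ (n / S) ^ 2 :=
  pow_le_pow_left₀ hδ ((le_div_iff₀ hS).2 h) 2

lemma tendsto_zero_of_nonneg_of_le_div_natCast {v : ℕ → ℝ} (a : ℝ) (hv : ∀ n, 0 ≤ v n)
    (hva : ∀ n, 1 ≤ n → v n ≤ a / n) : Tendsto v atTop (nhds 0) :=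
  squeeze_zero' (Eventually.of_forall hv) (eventually_atTop.2 ⟨1, hva⟩)
    (tendsto_const_nhds.div_atTop tendsto_natCast_atTop_atTop)

/-- asymptotic efficiency comparison of the paper's Result 2,
dominant-cluster case.  With `0 < b < a` and cluster sizes `N_g ≥ 1`, the
variance formulas `v̂_G = (a−b)/G²·∑ 1/N_g + b/G` and
`vP_G = (a−b)/∑N_g + b·∑N_g²/(∑N_g)²` satisfy `v̂_G ≤ a/G` and
`vP_G ≥ b·(N_g/∑N_g)²` for every `g` (hence `vP_G ≥ b·(max_g N_g/∑N_g)²`).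
Consequently, if the largest cluster keeps a share `max_g N_g ≥ δ·∑N_g`
(`δ > 0`) then `v̂_G → 0` as `G → ∞` while `vP_G ≥ bδ² > 0` for every `G ≥ 1`:
the cluster-average estimator is asymptotically more efficient than POLS. -/
theorem stmt12 (a b δ : ℝ) (hb : 0 < b) (hba : b < a) (hδ : 0 < δ)
    (N : (G : ℕ) → Fin G → ℕ) (hN : ∀ G g, 1 ≤ N G g)
    (vhat vP : ℕ → ℝ)
    (hvhat : ∀ G, vhat G =
      (a - b) / (G : ℝ) ^ 2 * (∑ g, ((N G g : ℝ))⁻¹) + b / (G : ℝ))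
    (hvP : ∀ G, vP G =
      (a - b) / (∑ g, (N G g : ℝ)) +
        b * (∑ g, (N G g : ℝ) ^ 2) / (∑ g, (N G g : ℝ)) ^ 2)
    (hdom : ∀ G : ℕ, 1 ≤ G → ∃ g : Fin G, δ * ∑ g', (N G g' : ℝ) ≤ (N G g : ℝ)) :
    (∀ G : ℕ, 1 ≤ G → vhat G ≤ a / (G : ℝ)) ∧
    (∀ G : ℕ, 1 ≤ G → ∀ g : Fin G,
      b * ((N G g : ℝ) / ∑ g', (N G g' : ℝ)) ^ 2 ≤ vP G) ∧
    Tendsto vhat atTop (nhds 0) ∧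
    (∀ G : ℕ, 1 ≤ G → b * δ ^ 2 ≤ vP G) := by
  have hN' : ∀ G g, (1 : ℝ) ≤ N G g := fun G g => by exact_mod_cast hN G g
  have hsum_pos : ∀ G, 1 ≤ G → 0 < ∑ g, (N G g : ℝ) := fun G hG =>
    sum_pos (fun g _ => zero_lt_one.trans_le (hN' G g)) ⟨⟨0, hG⟩, mem_univ _⟩
  have hvhat_le : ∀ G : ℕ, 1 ≤ G → vhat G ≤ a / G := fun G hG => by
    rw [hvhat]
    exact clusterAvgVar_le hba.le (by exact_mod_cast hG)
      (by simpa using sum_inv_le_card_of_one_le univ fun g _ => hN' G g)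
  have hvP_ge : ∀ G : ℕ, 1 ≤ G → ∀ g : Fin G,
      b * ((N G g : ℝ) / ∑ g', (N G g' : ℝ)) ^ 2 ≤ vP G := fun G hG g => by
    rw [hvP]
    exact mul_sq_div_le_pooledVar hb.le hba.le (hsum_pos G hG).le
      (sq_div_sum_le_sum_sq_div_sq (fun g => (N G g : ℝ)) (mem_univ g))
  refine ⟨hvhat_le, hvP_ge, ?_, fun G hG => ?_⟩
  · refine tendsto_zero_of_nonneg_of_le_div_natCast a (fun G => ?_) hvhat_le
    rw [hvhat]
    exact clusterAvgVar_nonneg hb.le hba.le G.cast_nonneg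
      (sum_nonneg fun g _ => inv_nonneg.2 (N G g).cast_nonneg)
  · obtain ⟨g, hg⟩ := hdom G hG
    calc b * δ ^ 2 ≤ b * ((N G g : ℝ) / ∑ g', (N G g' : ℝ)) ^ 2 :=
          mul_le_mul_of_nonneg_left (sq_le_sq_div_of_mul_le hδ.le (hsum_pos G hG) hg) hb.le
      _ ≤ vP G := hvP_ge G hG g
end

section
/- Fixed-design random coefficient clustered model with nondegenerate design and coefficient variation: suppose λ_min(X_gᵀX_g) ≥ c′·N_g for all g, the u_g are mutually independent, independent of all the ε's, with E[u_g] = 0 and Cov(u_g) = Δ satisfying λ_min(Δ) ≥ d > 0, and the ε_g are mutually independent with mean zero. Then E‖(Σ_{g=1}^G X_gᵀε_g + Σ_{g=1}^G X_gᵀX_g u_g)/(Σ_{g=1}^G N_g)‖² ≥ E‖(Σ_{g=1}^G X_gᵀX_g u_g)/(Σ_{g=1}^G N_g)‖² ≥ d·c′² · (Σ_{g=1}^G N_g²)/(Σ_{g=1}^G N_g)². In particular, the second moment of the normalized pooled OLS score is bounded away from zero along any sequence of such models for which (Σ N_g²)/(Σ N_g)² does not tend to 0. -/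
/-!
The ε-part of the score is independent of the centred u-part, so the cross term vanishes and
dropping it can only lower the second moment. The cluster terms `X_gᵀX_g u_g` are independent and
centred, so their second moments add, and each equals `tr(A Δ Aᵀ)` for `A = X_gᵀX_g`; row by row
this is at least `λ_min(Δ) ‖A‖_F² ≥ d A₀₀² ≥ d (c′N_g)²`, since a diagonal entry of `A` is at least
`λ_min(A)`. The last claim follows by squeezing the ratio between `0` and a multiple of the score's
second moment.
-/

open MeasureTheory ProbabilityTheory Matrix Filter

/-- Smallest eigenvalue of a real symmetric matrix via the Rayleigh quotient. -/
noncomputable def lamMin {n : ℕ} (S : Matrix (Fin n) (Fin n) ℝ) : ℝ :=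
  ⨅ v : {v : Fin n → ℝ // ∑ i, v i ^ 2 = 1}, v.1 ⬝ᵥ S.mulVec v.1

section lamMin

variable {n : ℕ} (S : Matrix (Fin n) (Fin n) ℝ)

lemma isCompact_setOf_sum_sq_eq_one : IsCompact {v : Fin n → ℝ | ∑ i, v i ^ 2 = 1} := by
  refine Metric.isCompact_of_isClosed_isBounded
    (isClosed_eq (by fun_prop) continuous_const)
    ((Metric.isBounded_closedBall (x := 0) (r := 1)).subset ?_)
  intro v hv
  rw [Metric.mem_closedBall, dist_zero_right, pi_norm_le_iff_of_nonneg zero_le_one]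
  intro i
  rw [Real.norm_eq_abs, ← sq_le_one_iff_abs_le_one, ← Set.mem_ofPred_eq.mp hv]
  exact Finset.single_le_sum (fun j _ => sq_nonneg (v j)) (Finset.mem_univ i)

lemma lamMin_le_dotProduct_mulVec {v : Fin n → ℝ} (hv : ∑ i, v i ^ 2 = 1) :
    lamMin S ≤ v ⬝ᵥ S *ᵥ v := by
  have hbdd := isCompact_setOf_sum_sq_eq_one.bddBelow_image
    (f := fun v : Fin n → ℝ => v ⬝ᵥ S *ᵥ v) (by fun_prop)
  rw [Set.image_eq_range] at hbdd
  exact ciInf_le hbdd ⟨v, hv⟩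

lemma lamMin_mul_sum_sq_le_dotProduct_mulVec (v : Fin n → ℝ) :
    lamMin S * ∑ i, v i ^ 2 ≤ v ⬝ᵥ S *ᵥ v := by
  rcases (by positivity : (0 : ℝ) ≤ ∑ i, v i ^ 2).eq_or_lt with hr | hr
  · have hv : v = 0 := funext fun i => pow_eq_zero_iff two_ne_zero |>.mp <|
      (Finset.sum_eq_zero_iff_of_nonneg fun j _ => sq_nonneg (v j)).mp hr.symm i (Finset.mem_univ i)
    simp [hv]
  have hunit : ∑ i, ((√(∑ i, v i ^ 2))⁻¹ • v) i ^ 2 = 1 := by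
    simp only [Pi.smul_apply, smul_eq_mul, mul_pow, ← Finset.mul_sum, inv_pow,
      Real.sq_sqrt hr.le]
    exact inv_mul_cancel₀ hr.ne'
  have h := lamMin_le_dotProduct_mulVec S hunit
  rw [mulVec_smul, dotProduct_smul, smul_dotProduct, smul_eq_mul, smul_eq_mul, ← mul_assoc,
    ← mul_inv, Real.mul_self_sqrt hr.le, le_inv_mul_iff₀ hr] at h
  linarith

lemma lamMin_le_diag (i : Fin n) : lamMin S ≤ S i i := by
  simpa using lamMin_le_dotProduct_mulVec S (v := Pi.single i 1) (by simp [Pi.single_apply])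

end lamMin

lemma mul_sq_le_sum_dotProduct_mulVec {k : ℕ} (i₀ : Fin k) {A D : Matrix (Fin k) (Fin k) ℝ}
    {m d : ℝ} (hm : 0 ≤ m) (hA : m ≤ lamMin A) (hd : 0 ≤ d) (hD : d ≤ lamMin D) :
    d * m ^ 2 ≤ ∑ i, A i ⬝ᵥ D *ᵥ A i :=
  calc d * m ^ 2 ≤ d * A i₀ i₀ ^ 2 := by
        gcongr
        exact hA.trans (lamMin_le_diag A i₀)
    _ ≤ d * ∑ i, ∑ j, A i j ^ 2 := by
        gcongr
        exact (Finset.single_le_sum (fun j _ => sq_nonneg (A i₀ j)) (Finset.mem_univ i₀)).trans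
          (Finset.single_le_sum (f := fun i => ∑ j, A i j ^ 2) (fun i _ => by positivity)
            (Finset.mem_univ i₀))
    _ ≤ ∑ i, lamMin D * ∑ j, A i j ^ 2 := by
        rw [Finset.mul_sum]
        gcongr
    _ ≤ ∑ i, A i ⬝ᵥ D *ᵥ A i := by
        gcongr with i
        exact lamMin_mul_sum_sq_le_dotProduct_mulVec D (A i)

section RandomVectors

variable {Ω : Type*} [MeasurableSpace Ω] {μ : Measure Ω}

lemma memLp_two_apply_of_integrable_sq {κ : Type*} {u : Ω → κ → ℝ} (hu : Measurable u)
    (hu2 : ∀ j, Integrable (fun ω => u ω j ^ 2) μ) (j : κ) : MemLp (fun ω => u ω j) 2 μ :=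
  (memLp_two_iff_integrable_sq ((measurable_pi_apply j).comp hu).aestronglyMeasurable).mpr (hu2 j)

section DotProduct

variable {κ : Type*} [Fintype κ] {u : Ω → κ → ℝ}

lemma memLp_dotProduct {p : ENNReal} (hu : ∀ j, MemLp (fun ω => u ω j) p μ) (v : κ → ℝ) :
    MemLp (fun ω => v ⬝ᵥ u ω) p μ :=
  memLp_finsetSum _ fun j _ => (hu j).const_mul (v j)

lemma integral_dotProduct_eq_zero (hu : ∀ j, Integrable (fun ω => u ω j) μ)
    (hu0 : ∀ j, ∫ ω, u ω j ∂μ = 0) (v : κ → ℝ) : ∫ ω, v ⬝ᵥ u ω ∂μ = 0 := by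
  simp only [dotProduct]
  rw [integral_finsetSum _ fun j _ => (hu j).const_mul (v j)]
  simp [integral_const_mul, hu0]

lemma integral_dotProduct_sq {Δ : Matrix κ κ ℝ} (hu : ∀ j, MemLp (fun ω => u ω j) 2 μ)
    (hΔ : ∀ j j', ∫ ω, u ω j * u ω j' ∂μ = Δ j j') (v : κ → ℝ) :
    ∫ ω, (v ⬝ᵥ u ω) ^ 2 ∂μ = v ⬝ᵥ Δ *ᵥ v := by
  have hprod : ∀ j j', Integrable (fun ω => v j * v j' * (u ω j * u ω j')) μ :=
    fun j j' => ((hu j).integrable_mul (hu j')).const_mul _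
  have hexpand : ∀ ω, (v ⬝ᵥ u ω) ^ 2 = ∑ j, ∑ j', v j * v j' * (u ω j * u ω j') := fun ω => by
    simp only [dotProduct, sq, Finset.sum_mul_sum]
    exact Finset.sum_congr rfl fun j _ => Finset.sum_congr rfl fun j' _ => by ring
  simp only [hexpand]
  rw [integral_finsetSum _ fun j _ => integrable_finsetSum _ fun j' _ => hprod j j']
  simp only [integral_finsetSum _ fun j' _ => hprod _ j', integral_const_mul, hΔ, dotProduct,
    mulVec, Finset.mul_sum]
  exact Finset.sum_congr rfl fun j _ => Finset.sum_congr rfl fun j' _ => by ring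

lemma integral_sum_sq_smul (c : ℝ) (F : Ω → κ → ℝ) :
    ∫ ω, ∑ i, (c • F ω) i ^ 2 ∂μ = c ^ 2 * ∫ ω, ∑ i, F ω i ^ 2 ∂μ := by
  simp only [Pi.smul_apply, smul_eq_mul, mul_pow, ← Finset.mul_sum, integral_const_mul]

end DotProduct

section SumMulVec

variable {ι : Type*} [Fintype ι] {κ : ι → Type*} [∀ g, Fintype (κ g)] {m : Type*}
  {v : (g : ι) → Ω → κ g → ℝ}

lemma memLp_sum_mulVec_apply {p : ENNReal} (hv : ∀ g j, MemLp (fun ω => v g ω j) p μ)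
    (M : (g : ι) → Matrix m (κ g) ℝ) (i : m) :
    MemLp (fun ω => (∑ g, M g *ᵥ v g ω) i) p μ := by
  simp only [Finset.sum_apply]
  exact memLp_finsetSum _ fun g _ => memLp_dotProduct (hv g) (M g i)

lemma integral_sum_mulVec_apply_eq_zero (hv : ∀ g j, Integrable (fun ω => v g ω j) μ)
    (hv0 : ∀ g j, ∫ ω, v g ω j ∂μ = 0) (M : (g : ι) → Matrix m (κ g) ℝ) (i : m) :
    ∫ ω, (∑ g, M g *ᵥ v g ω) i ∂μ = 0 := by
  simp only [Finset.sum_apply]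
  rw [integral_finsetSum (f := fun g ω => (M g *ᵥ v g ω) i) _ fun g _ => memLp_one_iff_integrable.mp
    (memLp_dotProduct (fun j => memLp_one_iff_integrable.mpr (hv g j)) (M g i))]
  exact Finset.sum_eq_zero fun g _ => integral_dotProduct_eq_zero (hv g) (hv0 g) (M g i)

end SumMulVec

lemma integral_sq_le_integral_add_sq [IsProbabilityMeasure μ] {f g : Ω → ℝ} (hf : MemLp f 2 μ)
    (hg : MemLp g 2 μ) (hfg : IndepFun f g μ) (hg0 : ∫ ω, g ω ∂μ = 0) :
    ∫ ω, g ω ^ 2 ∂μ ≤ ∫ ω, (f ω + g ω) ^ 2 ∂μ :=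
  calc ∫ ω, g ω ^ 2 ∂μ = Var[g; μ] := (variance_of_integral_eq_zero hg.aemeasurable hg0).symm
    _ ≤ Var[f; μ] + Var[g; μ] := le_add_of_nonneg_left (variance_nonneg f μ)
    _ = Var[f + g; μ] := (hfg.variance_add hf hg).symm
    _ ≤ ∫ ω, (f ω + g ω) ^ 2 ∂μ := variance_le_expectation_sq (hf.add hg).aestronglyMeasurable

lemma integral_sum_sq_eq_sum_integral_sq [IsFiniteMeasure μ] {ι : Type*} [Fintype ι] {w : ι → Ω → ℝ}
    (hw : ∀ g, MemLp (w g) 2 μ) (hind : Pairwise fun g g' => IndepFun (w g) (w g') μ)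
    (hw0 : ∀ g, ∫ ω, w g ω ∂μ = 0) :
    ∫ ω, (∑ g, w g ω) ^ 2 ∂μ = ∑ g, ∫ ω, w g ω ^ 2 ∂μ := by
  have hsum0 : ∫ ω, (∑ g, w g) ω ∂μ = 0 := by
    simp only [Finset.sum_apply]
    rw [integral_finsetSum _ fun g _ => (hw g).integrable one_le_two]
    exact Finset.sum_eq_zero fun g _ => hw0 g
  calc ∫ ω, (∑ g, w g ω) ^ 2 ∂μ = Var[∑ g, w g; μ] := by
        rw [variance_of_integral_eq_zero
          (memLp_finsetSum' _ fun g _ => hw g).aemeasurable hsum0]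
        simp only [Finset.sum_apply]
    _ = ∑ g, Var[w g; μ] :=
        IndepFun.variance_sum (fun g _ => hw g) fun g _ g' _ hne => hind hne
    _ = ∑ g, ∫ ω, w g ω ^ 2 ∂μ :=
        Finset.sum_congr rfl fun g _ => variance_of_integral_eq_zero (hw g).aemeasurable (hw0 g)

lemma integral_sum_sq_le_integral_sum_add_sq [IsProbabilityMeasure μ] {κ : Type*} [Fintype κ]
    {F H : Ω → κ → ℝ} (hF : ∀ i, MemLp (fun ω => F ω i) 2 μ) (hH : ∀ i, MemLp (fun ω => H ω i) 2 μ)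
    (hFH : IndepFun F H μ) (hH0 : ∀ i, ∫ ω, H ω i ∂μ = 0) :
    ∫ ω, ∑ i, H ω i ^ 2 ∂μ ≤ ∫ ω, ∑ i, (F ω i + H ω i) ^ 2 ∂μ := by
  rw [integral_finsetSum _ fun i _ => (hH i).integrable_sq,
    integral_finsetSum (f := fun i ω => (F ω i + H ω i) ^ 2) _
      fun i _ => ((hF i).add (hH i)).integrable_sq]
  exact Finset.sum_le_sum fun i _ => integral_sq_le_integral_add_sq (hF i) (hH i)
    (hFH.comp (measurable_pi_apply i) (measurable_pi_apply i)) (hH0 i)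

lemma integral_sum_sq_sum_mulVec [IsFiniteMeasure μ] {ι κ m : Type*} [Fintype ι] [Fintype κ]
    [Fintype m] {u : ι → Ω → κ → ℝ} {Δ : Matrix κ κ ℝ} (hu : ∀ g j, MemLp (fun ω => u g ω j) 2 μ)
    (hind : Pairwise fun g g' => IndepFun (u g) (u g') μ) (hu0 : ∀ g j, ∫ ω, u g ω j ∂μ = 0)
    (hΔ : ∀ g j j', ∫ ω, u g ω j * u g ω j' ∂μ = Δ j j') (A : ι → Matrix m κ ℝ) :
    ∫ ω, ∑ i, (∑ g, A g *ᵥ u g ω) i ^ 2 ∂μ = ∑ g, ∑ i, A g i ⬝ᵥ Δ *ᵥ A g i := by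
  rw [integral_finsetSum _ fun i _ => (memLp_sum_mulVec_apply hu A i).integrable_sq,
    Finset.sum_comm]
  refine Finset.sum_congr rfl fun i _ => ?_
  simp only [Finset.sum_apply]
  refine (integral_sum_sq_eq_sum_integral_sq (w := fun g ω => A g i ⬝ᵥ u g ω)
    (fun g => memLp_dotProduct (hu g) (A g i))
    (fun g g' hne => (hind hne).comp (φ := (A g i ⬝ᵥ ·)) (ψ := (A g' i ⬝ᵥ ·))
      (by fun_prop) (by fun_prop))
    (fun g => integral_dotProduct_eq_zero (fun j => (hu g j).integrable one_le_two) (hu0 g) _)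
    ).trans ?_
  exact Finset.sum_congr rfl fun g _ => integral_dotProduct_sq (hu g) (hΔ g) (A g i)

end RandomVectors

theorem stmt15_general {Ωs : Type*} [MeasurableSpace Ωs] (μ : Measure Ωs) [IsProbabilityMeasure μ]
    (k : ℕ) (hk : 1 ≤ k) (c' d : ℝ) (hc' : 0 < c') (hd : 0 < d)
    (N : (G : ℕ) → Fin G → ℕ)
    (X : (G : ℕ) → (g : Fin G) → Matrix (Fin (N G g)) (Fin k) ℝ)
    (ε : (G : ℕ) → (g : Fin G) → Ωs → (Fin (N G g) → ℝ))
    (u : (G : ℕ) → (g : Fin G) → Ωs → (Fin k → ℝ))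
    (hmeasε : ∀ G g, Measurable (ε G g)) (hmeasu : ∀ G g, Measurable (u G g))
    (hL2ε : ∀ G g i, Integrable (fun ω => (ε G g ω i) ^ 2) μ)
    (hL2u : ∀ G g i, Integrable (fun ω => (u G g ω i) ^ 2) μ)
    (hmeanu : ∀ G g i, ∫ ω, u G g ω i ∂μ = 0)
    (hindepu : ∀ G, iIndepFun (u G) μ)
    (hindepεu : ∀ G, IndepFun (fun ω (g : Fin G) => ε G g ω)
                              (fun ω (g : Fin G) => u G g ω) μ)
    (Δ : Matrix (Fin k) (Fin k) ℝ)
    (hΔ : ∀ G g i j, ∫ ω, u G g ω i * u G g ω j ∂μ = Δ i j)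
    (hXeig : ∀ G g, c' * (N G g : ℝ) ≤ lamMin ((X G g)ᵀ * X G g))
    (hΔeig : d ≤ lamMin Δ)
    (score uscore : (G : ℕ) → Ωs → (Fin k → ℝ))
    (hscore : ∀ G ω, score G ω =
      ((∑ g, (N G g : ℝ)))⁻¹ •
        ((∑ g, (X G g)ᵀ.mulVec (ε G g ω)) +
         ∑ g, ((X G g)ᵀ * X G g).mulVec (u G g ω)))
    (huscore : ∀ G ω, uscore G ω =
      ((∑ g, (N G g : ℝ)))⁻¹ • ∑ g, ((X G g)ᵀ * X G g).mulVec (u G g ω)) :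
    (∀ G : ℕ, 1 ≤ G →
      ∫ ω, ∑ i, (uscore G ω i) ^ 2 ∂μ ≤ ∫ ω, ∑ i, (score G ω i) ^ 2 ∂μ) ∧
    (∀ G : ℕ, 1 ≤ G →
      d * c' ^ 2 * (∑ g, (N G g : ℝ) ^ 2) / (∑ g, (N G g : ℝ)) ^ 2 ≤
        ∫ ω, ∑ i, (uscore G ω i) ^ 2 ∂μ) ∧
    (¬ Tendsto (fun G : ℕ => (∑ g, (N G g : ℝ) ^ 2) / (∑ g, (N G g : ℝ)) ^ 2)
        atTop (nhds 0) →
      ¬ Tendsto (fun G : ℕ => ∫ ω, ∑ i, (score G ω i) ^ 2 ∂μ) atTop (nhds 0)) := by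
  have hε2 G g := memLp_two_apply_of_integrable_sq (hmeasε G g) (hL2ε G g)
  have hu2 G g := memLp_two_apply_of_integrable_sq (hmeasu G g) (hL2u G g)
  have hcompare : ∀ G, ∫ ω, ∑ i, (uscore G ω i) ^ 2 ∂μ ≤ ∫ ω, ∑ i, (score G ω i) ^ 2 ∂μ := by
    intro G
    simp only [hscore, huscore, integral_sum_sq_smul, Pi.add_apply]
    refine mul_le_mul_of_nonneg_left ?_ (sq_nonneg _)
    exact integral_sum_sq_le_integral_sum_add_sq (memLp_sum_mulVec_apply (hε2 G) _)
      (memLp_sum_mulVec_apply (hu2 G) _)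
      ((hindepεu G).comp
        (φ := fun y : (g : Fin G) → Fin (N G g) → ℝ => ∑ g, (X G g)ᵀ *ᵥ y g)
        (ψ := fun y : Fin G → Fin k → ℝ => ∑ g, ((X G g)ᵀ * X G g) *ᵥ y g)
        (by fun_prop) (by fun_prop))
      (integral_sum_mulVec_apply_eq_zero (fun g j => (hu2 G g j).integrable one_le_two)
        (hmeanu G) _)
  have hbound : ∀ G, d * c' ^ 2 * (∑ g, (N G g : ℝ) ^ 2) / (∑ g, (N G g : ℝ)) ^ 2 ≤
      ∫ ω, ∑ i, (uscore G ω i) ^ 2 ∂μ := by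
    intro G
    simp only [huscore, integral_sum_sq_smul, integral_sum_sq_sum_mulVec (hu2 G)
      (fun g g' hne => (hindepu G).indepFun hne) (hmeanu G) (hΔ G)]
    calc d * c' ^ 2 * (∑ g, (N G g : ℝ) ^ 2) / (∑ g, (N G g : ℝ)) ^ 2
        = (∑ g, (N G g : ℝ))⁻¹ ^ 2 * ∑ g, d * (c' * N G g) ^ 2 := by
          rw [div_eq_inv_mul, ← inv_pow, Finset.mul_sum]
          exact congrArg _ (Finset.sum_congr rfl fun g _ => by ring)
      _ ≤ _ := by
          gcongr with g
          exact mul_sq_le_sum_dotProduct_mulVec ⟨0, hk⟩ (by positivity) (hXeig G g) hd.le hΔeig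
  refine ⟨fun G _ => hcompare G, fun G _ => hbound G, fun hratio hlim => hratio ?_⟩
  have hdc : 0 < d * c' ^ 2 := by positivity
  refine tendsto_of_tendsto_of_tendsto_of_le_of_le tendsto_const_nhds
    (by simpa using hlim.const_mul (d * c' ^ 2)⁻¹) (fun G => by positivity) fun G => ?_
  rw [le_inv_mul_iff₀ hdc, ← mul_div_assoc]
  exact (hbound G).trans (hcompare G)

/-- quantitative core of the paper's theorem on the
inconsistency of pooled OLS with unbalanced clusters.  If
`λ_min(X_gᵀX_g) ≥ c′·N_g` and `λ_min(Δ) ≥ d > 0`, then the normalized pooled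
OLS score satisfies
`E‖(∑X_gᵀε_g + ∑X_gᵀX_g u_g)/(∑N_g)‖² ≥ E‖(∑X_gᵀX_g u_g)/(∑N_g)‖²
  ≥ d·c′²·(∑N_g²)/(∑N_g)²`; in particular its second moment is bounded away
from zero along any sequence for which `(∑N_g²)/(∑N_g)²` does not tend to 0. -/
theorem stmt15 {Ωs : Type*} [MeasurableSpace Ωs] (μ : Measure Ωs) [IsProbabilityMeasure μ]
    (k : ℕ) (hk : 1 ≤ k) (c' d : ℝ) (hc' : 0 < c') (hd : 0 < d)
    (N : (G : ℕ) → Fin G → ℕ) (hN : ∀ G g, 1 ≤ N G g)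
    (X : (G : ℕ) → (g : Fin G) → Matrix (Fin (N G g)) (Fin k) ℝ)
    (ε : (G : ℕ) → (g : Fin G) → Ωs → (Fin (N G g) → ℝ))
    (u : (G : ℕ) → (g : Fin G) → Ωs → (Fin k → ℝ))
    (hmeasε : ∀ G g, Measurable (ε G g)) (hmeasu : ∀ G g, Measurable (u G g))
    (hL2ε : ∀ G g i, Integrable (fun ω => (ε G g ω i) ^ 2) μ)
    (hL2u : ∀ G g i, Integrable (fun ω => (u G g ω i) ^ 2) μ)
    (hmeanε : ∀ G g i, ∫ ω, ε G g ω i ∂μ = 0)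
    (hmeanu : ∀ G g i, ∫ ω, u G g ω i ∂μ = 0)
    (hindepε : ∀ G, iIndepFun (ε G) μ)
    (hindepu : ∀ G, iIndepFun (u G) μ)
    (hindepεu : ∀ G, IndepFun (fun ω (g : Fin G) => ε G g ω)
                              (fun ω (g : Fin G) => u G g ω) μ)
    (Δ : Matrix (Fin k) (Fin k) ℝ)
    (hΔ : ∀ G g i j, ∫ ω, u G g ω i * u G g ω j ∂μ = Δ i j)
    (hXeig : ∀ G g, c' * (N G g : ℝ) ≤ lamMin ((X G g)ᵀ * X G g))
    (hΔeig : d ≤ lamMin Δ)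
    (score uscore : (G : ℕ) → Ωs → (Fin k → ℝ))
    (hscore : ∀ G ω, score G ω =
      ((∑ g, (N G g : ℝ)))⁻¹ •
        ((∑ g, (X G g)ᵀ.mulVec (ε G g ω)) +
         ∑ g, ((X G g)ᵀ * X G g).mulVec (u G g ω)))
    (huscore : ∀ G ω, uscore G ω =
      ((∑ g, (N G g : ℝ)))⁻¹ • ∑ g, ((X G g)ᵀ * X G g).mulVec (u G g ω)) :
    (∀ G : ℕ, 1 ≤ G →
      ∫ ω, ∑ i, (uscore G ω i) ^ 2 ∂μ ≤ ∫ ω, ∑ i, (score G ω i) ^ 2 ∂μ) ∧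
    (∀ G : ℕ, 1 ≤ G →
      d * c' ^ 2 * (∑ g, (N G g : ℝ) ^ 2) / (∑ g, (N G g : ℝ)) ^ 2 ≤
        ∫ ω, ∑ i, (uscore G ω i) ^ 2 ∂μ) ∧
    (¬ Tendsto (fun G : ℕ => (∑ g, (N G g : ℝ) ^ 2) / (∑ g, (N G g : ℝ)) ^ 2)
        atTop (nhds 0) →
      ¬ Tendsto (fun G : ℕ => ∫ ω, ∑ i, (score G ω i) ^ 2 ∂μ) atTop (nhds 0)) :=
  stmt15_general μ k hk c' d hc' hd N X ε u hmeasε hmeasu hL2ε hL2u hmeanu hindepu hindepεu Δ hΔ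
    hXeig hΔeig score uscore hscore huscore
end
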